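/- arXiv:2404.00888 — 6 statements merged into one kernel-verified Lean document; each statement's English description precedes it below -/
import Mathlib

section
/- Let p ∈ ℕ and let θ₀, θ̂ ∈ ℝ^p satisfy ‖θ̂‖₁ ≤ ‖θ₀‖₁, and set T₀ := {j : (θ₀)_j ≠ 0}. Then the vector v := θ̂ − θ₀ satisfies ‖v_{T₀ᶜ}‖₁ ≤ ‖v_{T₀}‖₁ (i.e. v ∈ C_{T₀}), and consequently ‖v‖₁ ≤ 2‖v_{T₀}‖₁. -/
open MeasureTheory Filter Finset

/-- ℓ¹ norm on `ℝ^p`. -/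
noncomputable def l1 {p : ℕ} (v : Fin p → ℝ) : ℝ := ∑ j, |v j|

/-- Restriction of a vector to an index set (zero outside the set). -/
def restr {p : ℕ} (T : Finset (Fin p)) (v : Fin p → ℝ) : Fin p → ℝ :=
  fun j => if j ∈ T then v j else 0

/-! On the support `T` of `θ₀`, the reverse triangle inequality gives
`|θ₀ j + v j| ≥ |θ₀ j| - |v j|`, while off `T` simply `|θ₀ j + v j| = |v j|`. Summing,
`‖θ₀ + v‖₁ ≥ ‖θ₀‖₁ - ‖v_T‖₁ + ‖v_{Tᶜ}‖₁`, so `‖θ₀ + v‖₁ ≤ ‖θ₀‖₁` forces `‖v_{Tᶜ}‖₁ ≤ ‖v_T‖₁`. -/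

section

variable {p : ℕ}

lemma l1_restr (T : Finset (Fin p)) (v : Fin p → ℝ) :
    l1 (restr T v) = ∑ j ∈ T, |v j| := by
  simp only [l1, restr, apply_ite, abs_zero, Finset.sum_ite_mem, Finset.univ_inter]

lemma l1_eq_l1_restr_add_l1_restr_compl (T : Finset (Fin p)) (v : Fin p → ℝ) :
    l1 v = l1 (restr T v) + l1 (restr Tᶜ v) := by
  rw [l1_restr, l1_restr, l1, Finset.sum_add_sum_compl]

lemma l1_eq_sum_of_eq_zero_of_notMem {T : Finset (Fin p)} {θ : Fin p → ℝ}
    (hθ : ∀ j ∉ T, θ j = 0) : l1 θ = ∑ j ∈ T, |θ j| :=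
  (Finset.sum_subset (Finset.subset_univ T) fun j _ hj => by simp [hθ j hj]).symm

lemma l1_restr_compl_le_l1_restr_of_l1_add_le {T : Finset (Fin p)} {θ v : Fin p → ℝ}
    (hθ : ∀ j ∉ T, θ j = 0) (h : l1 (θ + v) ≤ l1 θ) :
    l1 (restr Tᶜ v) ≤ l1 (restr T v) := by
  have hlower : l1 θ - l1 (restr T v) + l1 (restr Tᶜ v) ≤ l1 (θ + v) := by
    rw [l1_eq_sum_of_eq_zero_of_notMem hθ, l1_restr, l1_restr,
      l1_eq_l1_restr_add_l1_restr_compl T, l1_restr, l1_restr, ← Finset.sum_sub_distrib]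
    refine add_le_add (Finset.sum_le_sum fun j _ => ?_) (Finset.sum_congr rfl fun j hj => ?_).le
    · simpa using abs_sub_abs_le_abs_sub (θ j) (-v j)
    · simp [hθ j (Finset.mem_compl.mp hj)]
  linarith

lemma l1_le_two_mul_l1_restr_of_l1_restr_compl_le {T : Finset (Fin p)} {v : Fin p → ℝ}
    (h : l1 (restr Tᶜ v) ≤ l1 (restr T v)) : l1 v ≤ 2 * l1 (restr T v) := by
  rw [l1_eq_l1_restr_add_l1_restr_compl T v]
  linarith

end

/-- First step of the proof of Theorem 2.2: if `‖θ̂‖₁ ≤ ‖θ₀‖₁` then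
`v = θ̂ − θ₀` lies in the cone `C_{T₀}`, and `‖v‖₁ ≤ 2‖v_{T₀}‖₁`. -/
theorem stmt0 {p : ℕ} (θ₀ θhat : Fin p → ℝ) (h : l1 θhat ≤ l1 θ₀)
    (T₀ : Finset (Fin p)) (hT : T₀ = Finset.univ.filter fun j => θ₀ j ≠ 0)
    (v : Fin p → ℝ) (hv : v = θhat - θ₀) :
    l1 (restr T₀ᶜ v) ≤ l1 (restr T₀ v) ∧ l1 v ≤ 2 * l1 (restr T₀ v) := by
  have hθ₀ : ∀ j ∉ T₀, θ₀ j = 0 := by simp [hT]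
  have hθhat : θ₀ + v = θhat := by rw [hv, add_sub_cancel]
  have hcone : l1 (restr T₀ᶜ v) ≤ l1 (restr T₀ v) :=
    l1_restr_compl_le_l1_restr_of_l1_add_le hθ₀ (hθhat ▸ h)
  exact ⟨hcone, l1_le_two_mul_l1_restr_of_l1_restr_compl_le hcone⟩
end

section
/- Let p ∈ ℕ, θ₀, θ̂ ∈ ℝ^p with ‖θ̂‖₁ ≤ ‖θ₀‖₁, set T₀ := {j : (θ₀)_j ≠ 0} and v := θ̂ − θ₀. Let b ∈ ℝ^p, c := ‖b‖_∞, let V be a real p×p matrix and δ > 0. Assume: (a) |vᵀ V v| ≤ |⟨v, b⟩|; and (b) for every nonzero w ∈ C_{T₀}, |wᵀ V w| > δ ‖w_{T₀}‖₁ ‖w‖_∞. Then ‖θ̂ − θ₀‖_∞ ≤ 2c/δ. -/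
/-!
The error `v = θ̂ - θ₀` lies in the cone `C_{T₀}`: on `T₀ᶜ` it equals `θ̂`, whose mass there is
paid for by the loss of mass on `T₀`, since `‖θ̂‖₁ ≤ ‖θ₀‖₁`. In the cone `‖v‖₁ ≤ 2 ‖v_{T₀}‖₁`, so
Hölder and (a) give `|vᵀ V v| ≤ 2c ‖v_{T₀}‖₁`, while (b) gives `|vᵀ V v| > δ ‖v_{T₀}‖₁ ‖v‖_∞`;
dividing by `‖v_{T₀}‖₁ > 0` yields the bound.
-/

open MeasureTheory Filter Finset

/-- ℓ^∞ norm on `ℝ^p`. -/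
noncomputable def linf {p : ℕ} (v : Fin p → ℝ) : ℝ := ⨆ j, |v j|

/-- The cone `C_{T₀} = {v : ‖v_{T₀ᶜ}‖₁ ≤ ‖v_{T₀}‖₁}`. -/
def inCone {p : ℕ} (T : Finset (Fin p)) (v : Fin p → ℝ) : Prop :=
  l1 (restr Tᶜ v) ≤ l1 (restr T v)

/-- Quadratic form `vᵀ V v`. -/
noncomputable def quadForm {p : ℕ} (V : Matrix (Fin p) (Fin p) ℝ) (v : Fin p → ℝ) : ℝ :=
  ∑ i, ∑ j, v i * V i j * v j

section Norms

variable {p : ℕ}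

lemma abs_le_linf (v : Fin p → ℝ) (j : Fin p) : |v j| ≤ linf v :=
  le_ciSup (f := fun i => |v i|) (Set.finite_range _).bddAbove j

lemma linf_nonneg (v : Fin p → ℝ) : 0 ≤ linf v :=
  Real.iSup_nonneg fun _ => abs_nonneg _

lemma linf_le {v : Fin p → ℝ} {a : ℝ} (ha : 0 ≤ a) (h : ∀ j, |v j| ≤ a) : linf v ≤ a :=
  Real.iSup_le h ha

lemma l1_eq_sum_add_sum_compl (T : Finset (Fin p)) (v : Fin p → ℝ) :
    l1 v = ∑ j ∈ T, |v j| + ∑ j ∈ Tᶜ, |v j| :=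
  (sum_add_sum_compl T _).symm

lemma abs_sum_mul_le_linf_mul_l1 (v b : Fin p → ℝ) : |∑ j, v j * b j| ≤ linf b * l1 v :=
  calc |∑ j, v j * b j| ≤ ∑ j, |v j| * |b j| := by
        simpa only [abs_mul] using abs_sum_le_sum_abs (fun j => v j * b j) univ
    _ ≤ ∑ j, |v j| * linf b := by gcongr with j; exact abs_le_linf b j
    _ = linf b * l1 v := by rw [l1, ← sum_mul, mul_comm]

end Norms

section Cone

variable {p : ℕ} {T : Finset (Fin p)}

lemma l1_le_two_mul_l1_restr {v : Fin p → ℝ} (hv : inCone T v) : l1 v ≤ 2 * l1 (restr T v) := by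
  rw [inCone, l1_restr, l1_restr] at hv
  rw [l1_eq_sum_add_sum_compl T, l1_restr]
  linarith

lemma l1_restr_pos {v : Fin p → ℝ} (hv : inCone T v) (hv0 : v ≠ 0) : 0 < l1 (restr T v) := by
  have hl1 : 0 < l1 v := by
    obtain ⟨j, hj⟩ := Function.ne_iff.mp hv0
    exact lt_of_lt_of_le (abs_pos.mpr hj) (single_le_sum (fun i _ => abs_nonneg (v i)) (mem_univ j))
  linarith [l1_le_two_mul_l1_restr hv]

theorem inCone_sub_of_l1_le {θ₀ θ : Fin p → ℝ} (hθ₀ : ∀ j ∉ T, θ₀ j = 0) (h : l1 θ ≤ l1 θ₀) :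
    inCone T (θ - θ₀) := by
  have hT : ∑ j ∈ T, |θ₀ j| - ∑ j ∈ T, |(θ - θ₀) j| ≤ ∑ j ∈ T, |θ j| := by
    rw [← sum_sub_distrib]
    gcongr with j
    rw [Pi.sub_apply, abs_sub_comm]
    linarith [abs_sub_abs_le_abs_sub (θ₀ j) (θ j)]
  have hTc : ∑ j ∈ Tᶜ, |(θ - θ₀) j| = ∑ j ∈ Tᶜ, |θ j| :=
    sum_congr rfl fun j hj => by simp [hθ₀ j (mem_compl.mp hj)]
  have hθ₀c : ∑ j ∈ Tᶜ, |θ₀ j| = 0 :=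
    sum_eq_zero fun j hj => by simp [hθ₀ j (mem_compl.mp hj)]
  rw [l1_eq_sum_add_sum_compl T θ, l1_eq_sum_add_sum_compl T θ₀] at h
  rw [inCone, l1_restr, l1_restr]
  linarith

end Cone

theorem linf_le_of_inCone {p : ℕ} {T : Finset (Fin p)} {V : Matrix (Fin p) (Fin p) ℝ}
    {v b : Fin p → ℝ} {δ : ℝ} (hδ : 0 < δ) (hv : inCone T v)
    (ha : |quadForm V v| ≤ |∑ j, v j * b j|)
    (hb : ∀ w : Fin p → ℝ, w ≠ 0 → inCone T w → δ * (l1 (restr T w) * linf w) < |quadForm V w|) :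
    linf v ≤ 2 * linf b / δ := by
  have hbound : 0 ≤ 2 * linf b / δ := div_nonneg (by linarith [linf_nonneg b]) hδ.le
  obtain rfl | hv0 := eq_or_ne v 0
  · exact linf_le hbound fun j => by simpa using hbound
  have hpos := l1_restr_pos hv hv0
  have key : δ * linf v * l1 (restr T v) < 2 * linf b * l1 (restr T v) :=
    calc δ * linf v * l1 (restr T v) = δ * (l1 (restr T v) * linf v) := by ring
      _ < |quadForm V v| := hb v hv0 hv
      _ ≤ |∑ j, v j * b j| := ha
      _ ≤ linf b * l1 v := abs_sum_mul_le_linf_mul_l1 v b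
      _ ≤ linf b * (2 * l1 (restr T v)) := by
          gcongr
          · exact linf_nonneg b
          · exact l1_le_two_mul_l1_restr hv
      _ = 2 * linf b * l1 (restr T v) := by ring
  rw [le_div_iff₀ hδ, mul_comm]
  exact (lt_of_mul_lt_mul_right key hpos.le).le

/-- Deterministic core of Theorem 2.2: the ℓ^∞ error bound for the Dantzig selector. -/
theorem stmt2 {p : ℕ} (θ₀ θhat : Fin p → ℝ) (h1 : l1 θhat ≤ l1 θ₀)
    (T₀ : Finset (Fin p)) (hT : T₀ = Finset.univ.filter fun j => θ₀ j ≠ 0)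
    (b : Fin p → ℝ) (c : ℝ) (hc : c = linf b)
    (V : Matrix (Fin p) (Fin p) ℝ) (δ : ℝ) (hδ : 0 < δ)
    (ha : |quadForm V (θhat - θ₀)| ≤ |∑ j, (θhat - θ₀) j * b j|)
    (hb : ∀ w : Fin p → ℝ, w ≠ 0 → inCone T₀ w →
      δ * (l1 (restr T₀ w) * linf w) < |quadForm V w|) :
    linf (θhat - θ₀) ≤ 2 * c / δ := by
  have hsupp : ∀ j ∉ T₀, θ₀ j = 0 := fun j hj => by simpa [hT] using hj
  subst hc
  exact linf_le_of_inCone hδ (inCone_sub_of_l1_le hsupp h1) ha hb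
end

section
/- Let p ∈ ℕ, θ₀, θ̂ ∈ ℝ^p, and let T₀ := {j : (θ₀)_j ≠ 0} be nonempty. Let c ≥ 0, δ > 0, and θ_min := min_{j ∈ T₀} |(θ₀)_j|. Assume ‖θ̂ − θ₀‖_∞ ≤ 2c/δ, θ_min > 4c/δ, and let τ ∈ ℝ satisfy 2c/δ < τ < θ_min/2. Then {j ∈ {1,…,p} : |θ̂_j| > τ} = T₀. -/
/-! Each coordinate of `θ̂` lies within `ε := 2c/δ` of that of `θ₀`. Off the support `|θ̂_j| ≤ ε < τ`,
while on it `|θ̂_j| ≥ θ_min - ε > 2τ - τ = τ`, so the threshold `τ` separates the two. -/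

open Finset

lemma abs_apply_le_linf {p : ℕ} (v : Fin p → ℝ) (j : Fin p) : |v j| ≤ linf v :=
  le_ciSup (f := fun j => |v j|) (Set.finite_range _).bddAbove j

lemma lt_abs_iff_ne_zero_of_abs_sub_le {x y ε τ : ℝ} (hxy : |x - y| ≤ ε) (hετ : ε < τ)
    (hy : y ≠ 0 → τ + ε < |y|) : τ < |x| ↔ y ≠ 0 := by
  constructor
  · rintro hx rfl
    rw [sub_zero] at hxy
    linarith
  · intro hy0
    have hrev : |y| - |x| ≤ |x - y| := by
      simpa only [abs_sub_comm y x] using abs_sub_abs_le_abs_sub y x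
    linarith [hy hy0]

lemma filter_threshold_eq_support {ι : Type*} [Fintype ι] {θ₀ θhat : ι → ℝ} {ε τ : ℝ}
    (herr : ∀ j, |θhat j - θ₀ j| ≤ ε) (hετ : ε < τ) (hsep : ∀ j, θ₀ j ≠ 0 → τ + ε < |θ₀ j|) :
    (univ.filter fun j => τ < |θhat j|) = univ.filter fun j => θ₀ j ≠ 0 :=
  filter_congr fun j _ => lt_abs_iff_ne_zero_of_abs_sub_le (herr j) hετ (hsep j)

theorem stmt3_general {p : ℕ} (θ₀ θhat : Fin p → ℝ)
    (T₀ : Finset (Fin p)) (hT : T₀ = Finset.univ.filter fun j => θ₀ j ≠ 0)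
    (hne : T₀.Nonempty) (c δ τ : ℝ)
    (θmin : ℝ) (hθmin : θmin = T₀.inf' hne fun j => |θ₀ j|)
    (herr : linf (θhat - θ₀) ≤ 2 * c / δ)
    (hτ1 : 2 * c / δ < τ) (hτ2 : τ < θmin / 2) :
    (Finset.univ.filter fun j => τ < |θhat j|) = T₀ := by
  have hcoord : ∀ j, |θhat j - θ₀ j| ≤ 2 * c / δ := fun j =>
    (abs_apply_le_linf (θhat - θ₀) j).trans herr
  have hmin : ∀ j, θ₀ j ≠ 0 → θmin ≤ |θ₀ j| := fun j hj => by
    rw [hθmin]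
    exact inf'_le _ (by simp [hT, hj])
  rw [hT]
  exact filter_threshold_eq_support hcoord hτ1 fun j hj => by linarith [hmin j hj]

/-- Deterministic core of the variable-selection consistency part of Theorem 2.2:
on the event `‖θ̂ − θ₀‖_∞ ≤ 2c/δ`, the thresholded support estimator recovers `T₀`. -/
theorem stmt3 {p : ℕ} (θ₀ θhat : Fin p → ℝ)
    (T₀ : Finset (Fin p)) (hT : T₀ = Finset.univ.filter fun j => θ₀ j ≠ 0)
    (hne : T₀.Nonempty) (c δ τ : ℝ) (hc : 0 ≤ c) (hδ : 0 < δ)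
    (θmin : ℝ) (hθmin : θmin = T₀.inf' hne fun j => |θ₀ j|)
    (herr : linf (θhat - θ₀) ≤ 2 * c / δ)
    (hgap : 4 * c / δ < θmin)
    (hτ1 : 2 * c / δ < τ) (hτ2 : τ < θmin / 2) :
    (Finset.univ.filter fun j => τ < |θhat j|) = T₀ :=
  stmt3_general θ₀ θhat T₀ hT hne c δ τ θmin hθmin herr hτ1 hτ2
end

section
/- (Proposition 3.2, expectation bound.) Let (Ω, ℱ, P, {ℱ_t}_{t≥0}) be a filtered probability space, p, n ∈ ℕ with p, n ≥ 1, and K ≥ 0. For t = 1,…,n let G_t : Ω → ℝ^p be ℱ_{t−1}-measurable and let u_t : Ω → ℝ be ℱ_t-measurable and square-integrable with E[u_t | ℱ_{t−1}] = 0 almost surely; set σ_t² := E[u_t² | ℱ_{t−1}]. Assume each coordinate G_t^i u_t is square-integrable and E[ ‖G_t‖_∞² σ_t² ] ≤ K for every t = 1,…,n. Then E[ ‖ (1/n) Σ_{t=1}^n G_t u_t ‖_∞ ] ≤ 2√2 · √( K·log(1+p) / n ). -/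
/-!
For `q > 2` the function `f x = ‖x‖_q ^ 2` on `ℝ^ι` is `2 (q - 1)`-smooth:
`f (x + y) ≤ f x + ⟪∇f x, y⟫ + (q - 1) f y`. Along a segment avoiding the origin this is a
second-order Taylor bound, the second derivative being controlled by Hölder's inequality; on a
segment through the origin `f` is an explicit quadratic. For the martingale transform
`S_k = ∑_{t ≤ k} u_t G_t` the linear term has zero mean, since `∇f (S_{k-1}) ⬝ G_k` is
`ℱ_{k-1}`-measurable and `E[u_k | ℱ_{k-1}] = 0`; hence `E f (S_n) ≤ (q - 1) ∑_t E f (u_t G_t)`.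
Comparing `‖·‖_q` with `‖·‖_∞` costs a factor `p ^ (2 / q)`, and `q = 4 log (1 + p)` gives
`(q - 1) p ^ (2 / q) ≤ 8 log (1 + p)`. Finally `E ‖S_n‖_∞ ≤ (E ‖S_n‖_∞ ^ 2) ^ (1 / 2)` and
`E[‖G_t‖_∞ ^ 2 u_t ^ 2] = E[‖G_t‖_∞ ^ 2 σ_t ^ 2] ≤ K`.
-/

open MeasureTheory ProbabilityTheory Filter Finset Asymptotics Topology

lemma hasDerivAt_mul_abs_rpow {r : ℝ} (hr : 0 < r) (s : ℝ) :
    HasDerivAt (fun v => v * |v| ^ r) ((r + 1) * |s| ^ r) s := by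
  rcases eq_or_ne s 0 with rfl | hs
  · rw [hasDerivAt_iff_isLittleO]
    have hlim : Tendsto (fun v : ℝ => |v| ^ r) (𝓝 0) (𝓝 0) := by
      simpa [Real.zero_rpow hr.ne'] using
        ((continuous_abs.tendsto (0 : ℝ)).rpow_const (Or.inr hr.le))
    simpa [Real.zero_rpow hr.ne'] using
      (isBigO_refl (fun v : ℝ => v) (𝓝 0)).mul_isLittleO
        ((isLittleO_const_iff one_ne_zero).2 hlim)
  · refine ((hasDerivAt_id' s).fun_mul ((hasDerivAt_abs hs).rpow_const (p := r)
      (Or.inl (abs_ne_zero.2 hs)))).congr_deriv ?_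
    have : s * (SignType.sign s : ℝ) * |s| ^ (r - 1) = |s| ^ r := by
      rw [self_mul_sign, mul_comm, ← Real.rpow_add_one (abs_ne_zero.2 hs), sub_add_cancel]
    linear_combination r * this

lemma image_le_add_deriv_mul_add_of_second_deriv_le {φ φ' φ'' : ℝ → ℝ} {a b C : ℝ} (hab : a ≤ b)
    (hφ : ∀ t ∈ Set.Icc a b, HasDerivAt φ (φ' t) t)
    (hφ' : ∀ t ∈ Set.Icc a b, HasDerivAt φ' (φ'' t) t) (hC : ∀ t ∈ Set.Icc a b, φ'' t ≤ C) :
    φ b ≤ φ a + φ' a * (b - a) + C / 2 * (b - a) ^ 2 := by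
  have mono : ∀ f f' : ℝ → ℝ, (∀ t ∈ Set.Icc a b, HasDerivAt f (f' t) t) →
      (∀ t ∈ Set.Icc a b, 0 ≤ f' t) → MonotoneOn f (Set.Icc a b) := fun f f' hf hf' =>
    monotoneOn_of_hasDerivWithinAt_nonneg (convex_Icc a b)
      (fun t ht => (hf t ht).continuousAt.continuousWithinAt)
      (fun t ht => (hf t (interior_subset ht)).hasDerivWithinAt)
      (fun t ht => hf' t (interior_subset ht))
  have hlin : ∀ s, HasDerivAt (fun s => s - a) 1 s := fun s => (hasDerivAt_id s).sub_const a
  have hφ'_le : ∀ t ∈ Set.Icc a b, φ' t ≤ φ' a + C * (t - a) := by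
    intro t ht
    have := mono (fun s => φ' a + C * (s - a) - φ' s) (fun s => C - φ'' s)
      (fun s hs => (((hlin s).const_mul C).const_add (φ' a)).sub (hφ' s hs) |>.congr_deriv
        (by ring))
      (fun s hs => sub_nonneg.2 (hC s hs)) (Set.left_mem_Icc.2 hab) ht ht.1
    simp only [sub_self, mul_zero, add_zero] at this
    linarith
  have := mono (fun s => φ a + φ' a * (s - a) + C / 2 * (s - a) ^ 2 - φ s)
    (fun s => φ' a + C * (s - a) - φ' s)
    (fun s hs => ((((hlin s).const_mul (φ' a)).const_add (φ a)).add
      (((hlin s).pow 2).const_mul (C / 2))).sub (hφ s hs) |>.congr_deriv (by ring))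
    (fun s hs => sub_nonneg.2 (hφ'_le s hs)) (Set.left_mem_Icc.2 hab) (Set.right_mem_Icc.2 hab) hab
  simp only [sub_self, mul_zero, add_zero, ne_eq, OfNat.ofNat_ne_zero, not_false_eq_true,
    zero_pow] at this
  linarith

lemma four_mul_log_sub_one_mul_rpow_le {P : ℝ} (hP : 0 ≤ P) :
    (4 * Real.log (1 + P) - 1) * P ^ (2 / (4 * Real.log (1 + P))) ≤ 8 * Real.log (1 + P) := by
  set L := Real.log (1 + P)
  have hL : 0 ≤ L := Real.log_nonneg (by linarith)
  have hexp : L * (2 / (4 * L)) ≤ 1 / 2 := by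
    rw [show L * (2 / (4 * L)) = L / L / 2 by ring]
    gcongr
    exact div_self_le_one L
  have hpow : P ^ (2 / (4 * L)) ≤ 2 :=
    calc P ^ (2 / (4 * L)) ≤ (1 + P) ^ (2 / (4 * L)) :=
          Real.rpow_le_rpow hP (by linarith) (by positivity)
      _ = Real.exp (L * (2 / (4 * L))) := Real.rpow_def_of_pos (by linarith) _
      _ ≤ Real.exp (1 / 2) := Real.exp_le_exp.2 hexp
      _ ≤ 2 := (Real.le_log_iff_exp_le two_pos).1 (by linarith [Real.log_two_gt_d9])
  nlinarith [Real.rpow_nonneg hP (2 / (4 * L))]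

lemma inv_mul_sqrt_mul_eq {n a : ℝ} (hn : 0 ≤ n) : n⁻¹ * √(n * a) = √(a / n) := by
  rcases hn.eq_or_lt with rfl | hn
  · simp
  rw [← Real.sqrt_sq (inv_nonneg.2 hn.le), ← Real.sqrt_mul (sq_nonneg _)]
  congr 1
  field_simp

lemma pi_norm_eq_ciSup_abs {ι : Type*} [Fintype ι] [Nonempty ι] (x : ι → ℝ) :
    ‖x‖ = ⨆ i, |x i| :=
  le_antisymm
    ((pi_norm_le_iff_of_nonneg (le_ciSup_of_le (Set.finite_range _).bddAbove
      (Classical.arbitrary ι) (abs_nonneg _))).2 fun i =>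
        le_ciSup (f := fun i => |x i|) (Set.finite_range _).bddAbove i)
    (ciSup_le fun i => norm_le_pi_norm x i)

noncomputable section LpNormSq

variable {ι : Type*}

lemma hasDerivAt_line_apply (x y : ι → ℝ) (i : ι) (t : ℝ) :
    HasDerivAt (fun s => (x + s • y) i) (y i) t := by
  simpa using ((hasDerivAt_id t).mul_const (y i)).const_add (x i)

variable [Fintype ι]

def lpNormSq (q : ℝ) (x : ι → ℝ) : ℝ := (∑ i, |x i| ^ q) ^ (2 / q)

def lpNormSqGrad (q : ℝ) (x : ι → ℝ) : ι → ℝ :=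
  fun i => 2 * (∑ j, |x j| ^ q) ^ ((2 - q) / q) * (x i * |x i| ^ (q - 2))

def lpNormSqHess (q : ℝ) (x y : ι → ℝ) : ℝ :=
  2 * (2 - q) * (∑ j, |x j| ^ q) ^ ((2 - 2 * q) / q) * (∑ i, x i * |x i| ^ (q - 2) * y i) ^ 2
    + 2 * (q - 1) * (∑ j, |x j| ^ q) ^ ((2 - q) / q) * ∑ i, |x i| ^ (q - 2) * y i ^ 2

variable {q : ℝ}

lemma sum_abs_rpow_nonneg (q : ℝ) (x : ι → ℝ) : 0 ≤ ∑ i, |x i| ^ q :=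
  sum_nonneg fun _ _ => Real.rpow_nonneg (abs_nonneg _) q

lemma lpNormSq_nonneg (q : ℝ) (x : ι → ℝ) : 0 ≤ lpNormSq q x :=
  Real.rpow_nonneg (sum_abs_rpow_nonneg q x) _

lemma sum_abs_rpow_pos (q : ℝ) {x : ι → ℝ} (hx : x ≠ 0) : 0 < ∑ i, |x i| ^ q := by
  obtain ⟨i, hi⟩ := Function.ne_iff.1 hx
  exact sum_pos' (fun j _ => Real.rpow_nonneg (abs_nonneg (x j)) q)
    ⟨i, mem_univ i, Real.rpow_pos_of_pos (abs_pos.2 hi) q⟩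

lemma norm_rpow_le_sum_abs_rpow (hq : 0 < q) (x : ι → ℝ) : ‖x‖ ^ q ≤ ∑ i, |x i| ^ q := by
  have hle : ‖x‖ ≤ (∑ i, |x i| ^ q) ^ q⁻¹ := by
    refine (pi_norm_le_iff_of_nonneg (by positivity)).2 fun i => ?_
    rw [Real.norm_eq_abs, ← Real.rpow_rpow_inv (abs_nonneg (x i)) hq.ne']
    exact Real.rpow_le_rpow (by positivity)
      (single_le_sum (fun j _ => Real.rpow_nonneg (abs_nonneg (x j)) q) (mem_univ i))
      (inv_nonneg.2 hq.le)
  calc ‖x‖ ^ q ≤ ((∑ i, |x i| ^ q) ^ q⁻¹) ^ q := Real.rpow_le_rpow (norm_nonneg x) hle hq.le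
    _ = ∑ i, |x i| ^ q := Real.rpow_inv_rpow (sum_abs_rpow_nonneg q x) hq.ne'

lemma sum_abs_rpow_le_card_mul_norm_rpow (hq : 0 ≤ q) (x : ι → ℝ) :
    ∑ i, |x i| ^ q ≤ Fintype.card ι * ‖x‖ ^ q := by
  rw [← nsmul_eq_mul, ← card_univ]
  exact sum_le_card_nsmul _ _ _ fun i _ =>
    Real.rpow_le_rpow (abs_nonneg _) (norm_le_pi_norm x i) hq

lemma rpow_rpow_two_div_eq_sq (hq : 0 < q) {a : ℝ} (ha : 0 ≤ a) : (a ^ q) ^ (2 / q) = a ^ 2 := by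
  rw [← Real.rpow_mul ha, mul_div_cancel₀ _ hq.ne']
  exact_mod_cast Real.rpow_natCast a 2

lemma norm_sq_le_lpNormSq (hq : 0 < q) (x : ι → ℝ) : ‖x‖ ^ 2 ≤ lpNormSq q x := by
  rw [← rpow_rpow_two_div_eq_sq hq (norm_nonneg x)]
  exact Real.rpow_le_rpow (by positivity) (norm_rpow_le_sum_abs_rpow hq x) (by positivity)

lemma lpNormSq_le_card_rpow_mul_norm_sq (hq : 0 < q) (x : ι → ℝ) :
    lpNormSq q x ≤ (Fintype.card ι : ℝ) ^ (2 / q) * ‖x‖ ^ 2 := by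
  rw [← rpow_rpow_two_div_eq_sq hq (norm_nonneg x), ← Real.mul_rpow (by positivity) (by positivity)]
  exact Real.rpow_le_rpow (sum_abs_rpow_nonneg q x) (sum_abs_rpow_le_card_mul_norm_rpow hq.le x)
    (by positivity)

lemma norm_lpNormSqGrad_le (hq : 2 ≤ q) (x : ι → ℝ) : ‖lpNormSqGrad q x‖ ≤ 2 * ‖x‖ := by
  refine (pi_norm_le_iff_of_nonneg (by positivity)).2 fun i => ?_
  rcases (norm_nonneg x).eq_or_lt with hx | hx
  · have : x i = 0 := norm_le_zero_iff.1 (hx ▸ norm_le_pi_norm x i)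
    simp [lpNormSqGrad, this]
  have hxi : |x i| ≤ ‖x‖ := norm_le_pi_norm x i
  have hN : (∑ j, |x j| ^ q) ^ ((2 - q) / q) ≤ ‖x‖ ^ (2 - q) := by
    calc (∑ j, |x j| ^ q) ^ ((2 - q) / q) ≤ (‖x‖ ^ q) ^ ((2 - q) / q) :=
          Real.rpow_le_rpow_of_nonpos (by positivity) (norm_rpow_le_sum_abs_rpow (by linarith) x)
            (div_nonpos_of_nonpos_of_nonneg (by linarith) (by linarith))
      _ = ‖x‖ ^ (2 - q) := by rw [← Real.rpow_mul hx.le, mul_div_cancel₀ _ (by linarith)]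
  have hxi' : |x i * |x i| ^ (q - 2)| ≤ ‖x‖ ^ (q - 1) := by
    rw [abs_mul, abs_of_nonneg (Real.rpow_nonneg (abs_nonneg _) _), mul_comm,
      ← Real.rpow_add_one' (abs_nonneg _) (by linarith), show q - 2 + 1 = q - 1 by ring]
    exact Real.rpow_le_rpow (abs_nonneg _) hxi (by linarith)
  calc ‖lpNormSqGrad q x i‖
      = 2 * (∑ j, |x j| ^ q) ^ ((2 - q) / q) * |x i * |x i| ^ (q - 2)| := by
        rw [lpNormSqGrad, Real.norm_eq_abs, abs_mul, abs_mul, abs_two,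
          abs_of_nonneg (Real.rpow_nonneg (sum_abs_rpow_nonneg q x) _)]
    _ ≤ 2 * ‖x‖ ^ (2 - q) * ‖x‖ ^ (q - 1) := by gcongr
    _ = 2 * ‖x‖ := by
        rw [mul_assoc, ← Real.rpow_add hx, show 2 - q + (q - 1) = 1 by ring, Real.rpow_one]

lemma lpNormSq_smul (hq : 0 < q) (a : ℝ) (x : ι → ℝ) :
    lpNormSq q (a • x) = a ^ 2 * lpNormSq q x := by
  have hsum : ∑ i, |(a • x) i| ^ q = |a| ^ q * ∑ i, |x i| ^ q := by
    simp_rw [mul_sum, Pi.smul_apply, smul_eq_mul, abs_mul,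
      Real.mul_rpow (abs_nonneg a) (abs_nonneg _)]
  rw [lpNormSq, lpNormSq, hsum, Real.mul_rpow (by positivity) (sum_abs_rpow_nonneg q x),
    rpow_rpow_two_div_eq_sq hq (abs_nonneg a), sq_abs]

lemma abs_rpow_sub_two_mul_sq (hq : q ≠ 0) (s : ℝ) : |s| ^ (q - 2) * s ^ 2 = |s| ^ q := by
  rcases eq_or_ne s 0 with rfl | hs
  · simp [Real.zero_rpow hq]
  · rw [← sq_abs, ← Real.rpow_natCast, ← Real.rpow_add (abs_pos.2 hs)]
    norm_num

lemma lpNormSqGrad_dotProduct (q : ℝ) (x y : ι → ℝ) :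
    lpNormSqGrad q x ⬝ᵥ y
      = 2 * (∑ j, |x j| ^ q) ^ ((2 - q) / q) * ∑ i, x i * |x i| ^ (q - 2) * y i := by
  simp only [dotProduct, lpNormSqGrad, mul_sum]
  exact sum_congr rfl fun i _ => by ring

lemma lpNormSqGrad_dotProduct_self (hq : 0 < q) (x : ι → ℝ) :
    lpNormSqGrad q x ⬝ᵥ x = 2 * lpNormSq q x := by
  have hsum : ∑ i, x i * |x i| ^ (q - 2) * x i = ∑ i, |x i| ^ q := by
    refine sum_congr rfl fun i _ => ?_
    rw [← abs_rpow_sub_two_mul_sq hq.ne' (x i)]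
    ring
  have hexp : (2 - q) / q + 1 = 2 / q := by field_simp; ring
  rw [lpNormSqGrad_dotProduct, hsum, mul_assoc,
    ← Real.rpow_add_one' (sum_abs_rpow_nonneg q x) (by rw [hexp]; positivity), hexp, lpNormSq]

lemma lpNormSqGrad_smul_dotProduct (hq : 0 < q) (a : ℝ) (y : ι → ℝ) :
    lpNormSqGrad q (a • y) ⬝ᵥ y = 2 * a * lpNormSq q y := by
  rcases eq_or_ne a 0 with rfl | ha
  · simp [lpNormSqGrad_dotProduct]
  calc lpNormSqGrad q (a • y) ⬝ᵥ y = a⁻¹ * (lpNormSqGrad q (a • y) ⬝ᵥ (a • y)) := by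
        rw [dotProduct_smul, smul_eq_mul, inv_mul_cancel_left₀ ha]
    _ = 2 * a * lpNormSq q y := by
        rw [lpNormSqGrad_dotProduct_self hq, lpNormSq_smul hq]
        field_simp

lemma lpNormSq_smul_add_le (hq : 2 ≤ q) (a : ℝ) (y : ι → ℝ) :
    lpNormSq q (a • y + y)
      ≤ lpNormSq q (a • y) + lpNormSqGrad q (a • y) ⬝ᵥ y + (q - 1) * lpNormSq q y := by
  have hq0 : 0 < q := by linarith
  have hy := lpNormSq_nonneg q y
  rw [show a • y + y = (a + 1) • y by rw [add_smul, one_smul], lpNormSq_smul hq0,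
    lpNormSq_smul hq0, lpNormSqGrad_smul_dotProduct hq0]
  nlinarith

lemma sum_abs_rpow_sub_two_mul_sq_le (hq : 2 < q) (x y : ι → ℝ) :
    ∑ i, |x i| ^ (q - 2) * y i ^ 2 ≤ (∑ i, |x i| ^ q) ^ ((q - 2) / q) * lpNormSq q y := by
  have hconj : (q / (q - 2)).HolderConjugate (q / 2) :=
    ⟨by rw [inv_div, inv_div, ← add_div, sub_add_cancel, div_self (by linarith), inv_one],
      div_pos (by linarith) (by linarith), div_pos (by linarith) two_pos⟩
  have e1 : ∀ i, (|x i| ^ (q - 2)) ^ (q / (q - 2)) = |x i| ^ q := fun i => by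
    rw [← Real.rpow_mul (abs_nonneg _), mul_div_cancel₀ _ (by linarith)]
  have e2 : ∀ i, (y i ^ 2) ^ (q / 2) = |y i| ^ q := fun i => by
    rw [← sq_abs, ← Real.rpow_natCast, ← Real.rpow_mul (abs_nonneg _)]
    norm_num [mul_div_cancel₀]
  have := Real.inner_le_Lp_mul_Lq_of_nonneg univ hconj
    (fun i _ => Real.rpow_nonneg (abs_nonneg (x i)) (q - 2)) (fun i _ => sq_nonneg (y i))
  simpa only [e1, e2, one_div_div, lpNormSq] using this

lemma lpNormSqHess_le (hq : 2 < q) (x y : ι → ℝ) :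
    lpNormSqHess q x y ≤ 2 * (q - 1) * lpNormSq q y := by
  obtain ⟨N, hNdef⟩ : ∃ N, N = ∑ j, |x j| ^ q := ⟨_, rfl⟩
  have hN0 : 0 ≤ N := hNdef ▸ sum_abs_rpow_nonneg q x
  rw [lpNormSqHess, ← hNdef]
  have hfirst : 2 * (2 - q) * N ^ ((2 - 2 * q) / q) * (∑ i, x i * |x i| ^ (q - 2) * y i) ^ 2 ≤ 0 :=
    mul_nonpos_of_nonpos_of_nonneg
      (mul_nonpos_of_nonpos_of_nonneg (by linarith) (Real.rpow_nonneg hN0 _))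
      (sq_nonneg _)
  have hsecond : N ^ ((2 - q) / q) * ∑ i, |x i| ^ (q - 2) * y i ^ 2 ≤ lpNormSq q y := by
    rcases hN0.eq_or_lt with hN | hN
    · rw [← hN, Real.zero_rpow (div_ne_zero (by linarith) (by linarith)), zero_mul]
      exact lpNormSq_nonneg q y
    calc N ^ ((2 - q) / q) * ∑ i, |x i| ^ (q - 2) * y i ^ 2
        ≤ N ^ ((2 - q) / q) * (N ^ ((q - 2) / q) * lpNormSq q y) := by
          gcongr
          exact hNdef ▸ sum_abs_rpow_sub_two_mul_sq_le hq x y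
      _ = lpNormSq q y := by
          rw [← mul_assoc, ← Real.rpow_add hN, ← add_div, show 2 - q + (q - 2) = 0 by ring,
            zero_div, Real.rpow_zero, one_mul]
  have hq1 : 0 ≤ 2 * (q - 1) := by linarith
  nlinarith [mul_le_mul_of_nonneg_left hsecond hq1]

lemma hasDerivAt_sum_abs_rpow_line (hq : 1 < q) (x y : ι → ℝ) (t : ℝ) :
    HasDerivAt (fun s => ∑ i, |(x + s • y) i| ^ q)
      (q * ∑ i, (x + t • y) i * |(x + t • y) i| ^ (q - 2) * y i) t := by
  rw [mul_sum]
  refine HasDerivAt.fun_sum fun i _ =>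
    ((hasDerivAt_abs_rpow _ hq).comp t (hasDerivAt_line_apply x y i t)).congr_deriv ?_
  ring

lemma hasDerivAt_sum_mul_abs_rpow_line (hq : 2 < q) (x y : ι → ℝ) (t : ℝ) :
    HasDerivAt (fun s => ∑ i, (x + s • y) i * |(x + s • y) i| ^ (q - 2) * y i)
      ((q - 1) * ∑ i, |(x + t • y) i| ^ (q - 2) * y i ^ 2) t := by
  rw [mul_sum]
  refine HasDerivAt.fun_sum fun i _ =>
    (((hasDerivAt_mul_abs_rpow (sub_pos.2 hq) _).comp t
      (hasDerivAt_line_apply x y i t)).mul_const (y i)).congr_deriv ?_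
  ring

lemma hasDerivAt_lpNormSq_line (hq : 1 < q) {x y : ι → ℝ} {t : ℝ} (h : x + t • y ≠ 0) :
    HasDerivAt (fun s => lpNormSq q (x + s • y)) (lpNormSqGrad q (x + t • y) ⬝ᵥ y) t := by
  refine ((hasDerivAt_sum_abs_rpow_line hq x y t).rpow_const (p := 2 / q)
    (Or.inl (sum_abs_rpow_pos q h).ne')).congr_deriv ?_
  rw [lpNormSqGrad_dotProduct, show 2 / q - 1 = (2 - q) / q by field_simp]
  field_simp

lemma hasDerivAt_lpNormSqGrad_line (hq : 2 < q) {x y : ι → ℝ} {t : ℝ} (h : x + t • y ≠ 0) :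
    HasDerivAt (fun s => lpNormSqGrad q (x + s • y) ⬝ᵥ y) (lpNormSqHess q (x + t • y) y) t := by
  simp only [lpNormSqGrad_dotProduct]
  refine ((((hasDerivAt_sum_abs_rpow_line (by linarith) x y t).rpow_const (p := (2 - q) / q)
    (Or.inl (sum_abs_rpow_pos q h).ne')).const_mul 2).mul
    (hasDerivAt_sum_mul_abs_rpow_line hq x y t)).congr_deriv ?_
  rw [lpNormSqHess, show (2 - q) / q - 1 = (2 - 2 * q) / q by field_simp; ring]
  field_simp

theorem lpNormSq_add_le (hq : 2 < q) (x y : ι → ℝ) :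
    lpNormSq q (x + y) ≤ lpNormSq q x + lpNormSqGrad q x ⬝ᵥ y + (q - 1) * lpNormSq q y := by
  by_cases hline : ∃ c ∈ Set.Icc (0 : ℝ) 1, x + c • y = 0
  · obtain ⟨c, -, hc⟩ := hline
    rw [show x = (-c) • y by rw [neg_smul, eq_neg_iff_add_eq_zero, hc]]
    exact lpNormSq_smul_add_le hq.le (-c) y
  push Not at hline
  have := image_le_add_deriv_mul_add_of_second_deriv_le zero_le_one
    (fun t ht => hasDerivAt_lpNormSq_line (by linarith) (hline t ht))
    (fun t ht => hasDerivAt_lpNormSqGrad_line hq (hline t ht))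
    (fun t _ => lpNormSqHess_le hq _ y)
  simp only [one_smul, zero_smul, add_zero, sub_zero, mul_one, one_pow] at this
  linarith

lemma measurable_lpNormSq (q : ℝ) : Measurable (lpNormSq (ι := ι) q) := by
  unfold lpNormSq
  fun_prop

lemma measurable_lpNormSqGrad (q : ℝ) : Measurable (lpNormSqGrad (ι := ι) q) := by
  unfold lpNormSqGrad
  fun_prop

end LpNormSq

section Integrals

variable {Ω : Type*} {m m0 : MeasurableSpace Ω} {μ : Measure Ω}

lemma stronglyMeasurable_pi_lambda {ι : Type*} [Fintype ι] {f : Ω → ι → ℝ}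
    (hf : ∀ i, StronglyMeasurable[m] fun ω => f ω i) : StronglyMeasurable[m] f :=
  (measurable_pi_lambda f fun i => (hf i).measurable).stronglyMeasurable

lemma integral_mul_eq_integral_mul_condExp (hm : m ≤ m0) [SigmaFinite (μ.trim hm)] {g v : Ω → ℝ}
    (hg : StronglyMeasurable[m] g) (hgv : Integrable (g * v) μ) (hv : Integrable v μ) :
    ∫ ω, g ω * v ω ∂μ = ∫ ω, g ω * (μ[v|m]) ω ∂μ :=
  (integral_condExp hm).symm.trans
    (integral_congr_ae (condExp_mul_of_stronglyMeasurable_left hg hgv hv))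

lemma integral_le_sqrt_integral_sq [IsProbabilityMeasure μ] {X : Ω → ℝ} (hX : MemLp X 2 μ) :
    ∫ ω, X ω ∂μ ≤ √(∫ ω, X ω ^ 2 ∂μ) := by
  have h := variance_nonneg X μ
  rw [variance_eq_sub hX] at h
  exact (le_abs_self _).trans (Real.abs_le_sqrt (by simpa using h))

lemma integral_norm_inv_smul_le_sqrt {E : Type*} [NormedAddCommGroup E] [NormedSpace ℝ E]
    [IsProbabilityMeasure μ] {X : Ω → E} (hX : MemLp X 2 μ) {n C : ℝ} (hn : 0 ≤ n)
    (h : ∫ ω, ‖X ω‖ ^ 2 ∂μ ≤ n * C) :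
    ∫ ω, ‖n⁻¹ • X ω‖ ∂μ ≤ √(C / n) := by
  simp_rw [norm_smul, norm_inv, Real.norm_of_nonneg hn]
  calc ∫ ω, n⁻¹ * ‖X ω‖ ∂μ = n⁻¹ * ∫ ω, ‖X ω‖ ∂μ := integral_const_mul _ _
    _ ≤ n⁻¹ * √(∫ ω, ‖X ω‖ ^ 2 ∂μ) := by
        gcongr
        exact integral_le_sqrt_integral_sq hX.norm
    _ ≤ n⁻¹ * √(n * C) := by gcongr
    _ = √(C / n) := inv_mul_sqrt_mul_eq hn

variable {ι : Type*} [Fintype ι] {q : ℝ}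

lemma MeasureTheory.MemLp.integrable_dotProduct {X Y : Ω → ι → ℝ} (hX : MemLp X 2 μ)
    (hY : MemLp Y 2 μ) :
    Integrable (fun ω => X ω ⬝ᵥ Y ω) μ :=
  integrable_finsetSum _ fun i _ => (hX.eval i).integrable_mul (hY.eval i)

lemma integral_dotProduct_eq_zero_of_condExp_eq_zero [IsFiniteMeasure μ] (hm : m ≤ m0)
    {G D : Ω → ι → ℝ} (hG : StronglyMeasurable[m] G) (hGL2 : MemLp G 2 μ) (hDL2 : MemLp D 2 μ)
    (hD : ∀ i, μ[fun ω => D ω i|m] =ᵐ[μ] 0) :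
    ∫ ω, G ω ⬝ᵥ D ω ∂μ = 0 := by
  have hint : ∀ i, Integrable (fun ω => G ω i * D ω i) μ := fun i =>
    (hGL2.eval i).integrable_mul (hDL2.eval i)
  simp only [dotProduct]
  rw [integral_finsetSum _ fun i _ => hint i]
  refine sum_eq_zero fun i _ => ?_
  have hGi : StronglyMeasurable[m] fun ω => G ω i :=
    (measurable_pi_apply i).comp hG.measurable |>.stronglyMeasurable
  rw [integral_mul_eq_integral_mul_condExp hm hGi (hint i) ((hDL2.eval i).integrable one_le_two)]
  have hzero : (fun ω => G ω i * (μ[fun ω => D ω i|m]) ω) =ᵐ[μ] 0 :=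
    (hD i).mono fun ω hω => by simp [hω]
  simp [integral_congr_ae hzero]

lemma MeasureTheory.MemLp.integrable_lpNormSq (hq : 0 < q) {X : Ω → ι → ℝ} (hX : MemLp X 2 μ) :
    Integrable (fun ω => lpNormSq q (X ω)) μ := by
  refine ((hX.integrable_norm_pow two_ne_zero).const_mul ((Fintype.card ι : ℝ) ^ (2 / q))).mono'
    ((measurable_lpNormSq q).comp_aemeasurable hX.aemeasurable).aestronglyMeasurable
    (ae_of_all _ fun ω => ?_)
  rw [Real.norm_of_nonneg (lpNormSq_nonneg q _)]
  exact lpNormSq_le_card_rpow_mul_norm_sq hq (X ω)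

lemma integral_lpNormSq_add_le [IsFiniteMeasure μ] (hm : m ≤ m0) (hq : 2 < q) {S D : Ω → ι → ℝ}
    (hS : StronglyMeasurable[m] S) (hSL2 : MemLp S 2 μ) (hDL2 : MemLp D 2 μ)
    (hD : ∀ i, μ[fun ω => D ω i|m] =ᵐ[μ] 0) :
    ∫ ω, lpNormSq q (S ω + D ω) ∂μ
      ≤ ∫ ω, lpNormSq q (S ω) ∂μ + (q - 1) * ∫ ω, lpNormSq q (D ω) ∂μ := by
  have hq0 : 0 < q := by linarith
  have hgradm : StronglyMeasurable[m] fun ω => lpNormSqGrad q (S ω) :=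
    ((measurable_lpNormSqGrad q).comp hS.measurable).stronglyMeasurable
  have hgradL2 : MemLp (fun ω => lpNormSqGrad q (S ω)) 2 μ :=
    hSL2.of_le_mul (hgradm.mono hm).aestronglyMeasurable
      (ae_of_all _ fun ω => norm_lpNormSqGrad_le hq.le (S ω))
  have horth : ∫ ω, lpNormSqGrad q (S ω) ⬝ᵥ D ω ∂μ = 0 :=
    integral_dotProduct_eq_zero_of_condExp_eq_zero hm hgradm hgradL2 hDL2 hD
  have hint₁ := hSL2.integrable_lpNormSq hq0
  have hint₂ := hgradL2.integrable_dotProduct hDL2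
  have hint₃ := (hDL2.integrable_lpNormSq hq0).const_mul (q - 1)
  calc ∫ ω, lpNormSq q (S ω + D ω) ∂μ
      ≤ ∫ ω, (lpNormSq q (S ω) + lpNormSqGrad q (S ω) ⬝ᵥ D ω + (q - 1) * lpNormSq q (D ω)) ∂μ :=
        integral_mono ((hSL2.add hDL2).integrable_lpNormSq hq0)
          ((hint₁.fun_add hint₂).fun_add hint₃) fun ω => lpNormSq_add_le hq _ _
    _ = ∫ ω, lpNormSq q (S ω) ∂μ + (q - 1) * ∫ ω, lpNormSq q (D ω) ∂μ := by
        rw [integral_add (hint₁.fun_add hint₂) hint₃, integral_add hint₁ hint₂, horth,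
          integral_const_mul, add_zero]

theorem integral_lpNormSq_sum_le [IsFiniteMeasure μ] (ℱ : Filtration ℕ m0) (hq : 2 < q) (n : ℕ)
    {D : ℕ → Ω → ι → ℝ} (hD : ∀ t ∈ Icc 1 n, StronglyMeasurable[ℱ t] (D t))
    (hL2 : ∀ t ∈ Icc 1 n, MemLp (D t) 2 μ)
    (hmds : ∀ t ∈ Icc 1 n, ∀ i, μ[fun ω => D t ω i|ℱ (t - 1)] =ᵐ[μ] 0) :
    ∫ ω, lpNormSq q (∑ t ∈ Icc 1 n, D t ω) ∂μ
      ≤ (q - 1) * ∑ t ∈ Icc 1 n, ∫ ω, lpNormSq q (D t ω) ∂μ := by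
  induction n with
  | zero =>
    have hq0 : 0 < q := by linarith
    simp [lpNormSq, Real.zero_rpow hq0.ne', Real.zero_rpow (div_pos two_pos hq0).ne']
  | succ k ih =>
    have hsub : Icc 1 k ⊆ Icc 1 (k + 1) := Icc_subset_Icc_right k.le_succ
    have hk : k + 1 ∈ Icc 1 (k + 1) := right_mem_Icc.2 (Nat.le_add_left 1 k)
    specialize ih (fun t ht => hD t (hsub ht)) (fun t ht => hL2 t (hsub ht))
      (fun t ht => hmds t (hsub ht))
    have hstep := integral_lpNormSq_add_le (ℱ.le k) hq
      (Finset.stronglyMeasurable_fun_sum _ fun t ht =>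
        (hD t (hsub ht)).mono (ℱ.mono (mem_Icc.1 ht).2))
      (memLp_finsetSum _ fun t ht => hL2 t (hsub ht)) (hL2 _ hk) (hmds _ hk)
    simp only [sum_Icc_succ_top (Nat.le_add_left 1 k)]
    linarith

theorem integral_norm_sum_sq_le [IsFiniteMeasure μ] [Nonempty ι] (ℱ : Filtration ℕ m0) (n : ℕ)
    {D : ℕ → Ω → ι → ℝ} (hD : ∀ t ∈ Icc 1 n, StronglyMeasurable[ℱ t] (D t))
    (hL2 : ∀ t ∈ Icc 1 n, MemLp (D t) 2 μ)
    (hmds : ∀ t ∈ Icc 1 n, ∀ i, μ[fun ω => D t ω i|ℱ (t - 1)] =ᵐ[μ] 0) :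
    ∫ ω, ‖∑ t ∈ Icc 1 n, D t ω‖ ^ 2 ∂μ
      ≤ 8 * Real.log (1 + Fintype.card ι) * ∑ t ∈ Icc 1 n, ∫ ω, ‖D t ω‖ ^ 2 ∂μ := by
  set q := 4 * Real.log (1 + Fintype.card ι)
  have hq : 2 < q := by
    have hcard : (1 : ℝ) ≤ Fintype.card ι := by exact_mod_cast Fintype.card_pos
    have : Real.log 2 ≤ Real.log (1 + Fintype.card ι) := Real.log_le_log two_pos (by linarith)
    linarith [Real.log_two_gt_d9]
  have hq0 : 0 < q := by linarith
  have hSL2 : MemLp (fun ω => ∑ t ∈ Icc 1 n, D t ω) 2 μ := memLp_finsetSum _ hL2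
  calc ∫ ω, ‖∑ t ∈ Icc 1 n, D t ω‖ ^ 2 ∂μ
      ≤ ∫ ω, lpNormSq q (∑ t ∈ Icc 1 n, D t ω) ∂μ :=
        integral_mono (hSL2.integrable_norm_pow two_ne_zero) (hSL2.integrable_lpNormSq hq0)
          fun ω => norm_sq_le_lpNormSq hq0 _
    _ ≤ (q - 1) * ∑ t ∈ Icc 1 n, ∫ ω, lpNormSq q (D t ω) ∂μ :=
        integral_lpNormSq_sum_le ℱ hq n hD hL2 hmds
    _ ≤ (q - 1) * ∑ t ∈ Icc 1 n, (Fintype.card ι : ℝ) ^ (2 / q) * ∫ ω, ‖D t ω‖ ^ 2 ∂μ := by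
        gcongr with t ht
        · linarith
        rw [← integral_const_mul]
        exact integral_mono ((hL2 t ht).integrable_lpNormSq hq0)
          (((hL2 t ht).integrable_norm_pow two_ne_zero).const_mul _)
          fun ω => lpNormSq_le_card_rpow_mul_norm_sq hq0 _
    _ = (q - 1) * (Fintype.card ι : ℝ) ^ (2 / q) * ∑ t ∈ Icc 1 n, ∫ ω, ‖D t ω‖ ^ 2 ∂μ := by
        rw [← mul_sum, mul_assoc]
    _ ≤ 8 * Real.log (1 + Fintype.card ι) * ∑ t ∈ Icc 1 n, ∫ ω, ‖D t ω‖ ^ 2 ∂μ :=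
        mul_le_mul_of_nonneg_right (four_mul_log_sub_one_mul_rpow_le (Nat.cast_nonneg _))
          (sum_nonneg fun t _ => integral_nonneg fun ω => sq_nonneg _)

theorem integral_norm_sum_smul_sq_le [IsFiniteMeasure μ] [Nonempty ι] (ℱ : Filtration ℕ m0)
    (n : ℕ) {G : ℕ → Ω → ι → ℝ} {u : ℕ → Ω → ℝ}
    (hG : ∀ t ∈ Icc 1 n, StronglyMeasurable[ℱ (t - 1)] (G t))
    (hu : ∀ t ∈ Icc 1 n, StronglyMeasurable[ℱ t] (u t))
    (huL2 : ∀ t ∈ Icc 1 n, MemLp (u t) 2 μ)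
    (hmd : ∀ t ∈ Icc 1 n, μ[u t|ℱ (t - 1)] =ᵐ[μ] 0)
    (hGuL2 : ∀ t ∈ Icc 1 n, MemLp (fun ω => u t ω • G t ω) 2 μ) :
    ∫ ω, ‖∑ t ∈ Icc 1 n, u t ω • G t ω‖ ^ 2 ∂μ
      ≤ 8 * Real.log (1 + Fintype.card ι) *
        ∑ t ∈ Icc 1 n, ∫ ω, ‖G t ω‖ ^ 2 * (μ[fun ω => u t ω ^ 2|ℱ (t - 1)]) ω ∂μ := by
  have hnorm : ∀ t ω, ‖u t ω • G t ω‖ ^ 2 = ‖G t ω‖ ^ 2 * u t ω ^ 2 := fun t ω => by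
    rw [norm_smul, mul_pow, Real.norm_eq_abs, sq_abs, mul_comm]
  refine (integral_norm_sum_sq_le ℱ n (D := fun t ω => u t ω • G t ω)
    (fun t ht => (hu t ht).smul ((hG t ht).mono (ℱ.mono (Nat.sub_le t 1)))) hGuL2
    (fun t ht i => ?_)).trans_eq ?_
  · exact (condExp_mul_of_aestronglyMeasurable_right
      ((measurable_pi_apply i).comp (hG t ht).measurable).aestronglyMeasurable
      (((hGuL2 t ht).eval i).integrable one_le_two) ((huL2 t ht).integrable one_le_two)).trans
      ((hmd t ht).mono fun ω hω => by simp [hω])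
  refine congrArg _ (sum_congr rfl fun t ht => ?_)
  have hint : Integrable (fun ω => ‖G t ω‖ ^ 2 * u t ω ^ 2) μ := by
    simpa only [hnorm] using (hGuL2 t ht).integrable_norm_pow two_ne_zero
  simp_rw [hnorm]
  exact integral_mul_eq_integral_mul_condExp (ℱ.le _) ((hG t ht).norm.pow 2) hint
    ((memLp_two_iff_integrable_sq (huL2 t ht).1).1 (huL2 t ht))

end Integrals

theorem stmt9_general {Ω : Type*} {m0 : MeasurableSpace Ω} (μ : Measure Ω) [IsProbabilityMeasure μ]
    (ℱ : Filtration ℕ m0) (p n : ℕ) (hp : 1 ≤ p)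
    (K : ℝ)
    (G : ℕ → Ω → Fin p → ℝ) (u : ℕ → Ω → ℝ)
    (hGmeas : ∀ t ∈ Finset.Icc 1 n, ∀ i, StronglyMeasurable[ℱ (t - 1)] fun ω => G t ω i)
    (humeas : ∀ t ∈ Finset.Icc 1 n, StronglyMeasurable[ℱ t] (u t))
    (huL2 : ∀ t ∈ Finset.Icc 1 n, Integrable (fun ω => (u t ω) ^ 2) μ)
    (hmd : ∀ t ∈ Finset.Icc 1 n, μ[u t|ℱ (t - 1)] =ᵐ[μ] 0)
    (hGuL2 : ∀ t ∈ Finset.Icc 1 n, ∀ i, Integrable (fun ω => (G t ω i * u t ω) ^ 2) μ)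
    (hmom : ∀ t ∈ Finset.Icc 1 n,
      ∫ ω, (⨆ i, |G t ω i|) ^ 2 * (μ[(fun ω' => (u t ω') ^ 2)|ℱ (t - 1)]) ω ∂μ ≤ K) :
    ∫ ω, (⨆ i, |(1 / n : ℝ) * ∑ t ∈ Finset.Icc 1 n, G t ω i * u t ω|) ∂μ
      ≤ 2 * Real.sqrt 2 * Real.sqrt (K * Real.log (1 + p) / n) := by
  have : Nonempty (Fin p) := ⟨⟨0, hp⟩⟩
  have hG : ∀ t ∈ Icc 1 n, StronglyMeasurable[ℱ (t - 1)] (G t) := fun t ht =>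
    stronglyMeasurable_pi_lambda (hGmeas t ht)
  have hu : ∀ t ∈ Icc 1 n, MemLp (u t) 2 μ := fun t ht =>
    (memLp_two_iff_integrable_sq ((humeas t ht).mono (ℱ.le t)).aestronglyMeasurable).2 (huL2 t ht)
  have hGu : ∀ t ∈ Icc 1 n, MemLp (fun ω => u t ω • G t ω) 2 μ := fun t ht =>
    MemLp.of_eval fun i => (memLp_two_iff_integrable_sq (((hu t ht).1.mul
      ((hG t ht).mono (ℱ.le _)).measurable.eval.aestronglyMeasurable))).2
        (by simpa only [Pi.mul_apply, mul_comm] using hGuL2 t ht i)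
  have hS := integral_norm_sum_smul_sq_le ℱ n hG humeas hu hmd hGu
  rw [Fintype.card_fin] at hS
  have hK : ∑ t ∈ Icc 1 n, ∫ ω, ‖G t ω‖ ^ 2 * (μ[fun ω => u t ω ^ 2|ℱ (t - 1)]) ω ∂μ ≤ n * K :=
    (sum_le_card_nsmul _ _ _ fun t ht => by
      simpa only [pi_norm_eq_ciSup_abs] using hmom t ht).trans_eq (by simp)
  have hLHS : ∀ ω, (⨆ i, |(1 / n : ℝ) * ∑ t ∈ Icc 1 n, G t ω i * u t ω|)
      = ‖(n : ℝ)⁻¹ • ∑ t ∈ Icc 1 n, u t ω • G t ω‖ := fun ω => by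
    simp only [pi_norm_eq_ciSup_abs, Pi.smul_apply, Finset.sum_apply, smul_eq_mul, one_div,
      mul_comm (u _ ω)]
  have hlog : 0 ≤ Real.log (1 + p) := Real.log_nonneg (by simp)
  simp_rw [hLHS]
  calc _ ≤ √(8 * Real.log (1 + p) * K / n) :=
        integral_norm_inv_smul_le_sqrt (X := fun ω => ∑ t ∈ Icc 1 n, u t ω • G t ω)
          (memLp_finsetSum _ hGu) n.cast_nonneg
          (hS.trans ((mul_le_mul_of_nonneg_left hK (by positivity)).trans_eq (by ring)))
    _ = 2 * √2 * √(K * Real.log (1 + p) / n) := by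
        rw [show 8 * Real.log (1 + p) * K / n = 2 ^ 2 * 2 * (K * Real.log (1 + p) / n) by ring,
          Real.sqrt_mul (by positivity), Real.sqrt_mul (by positivity), Real.sqrt_sq zero_le_two]

/-- Proposition 3.2 (expectation bound): the expected ℓ^∞ norm of the martingale
score `(1/n) Σ_t G_t u_t` is bounded by `2√2 √(K log(1+p)/n)`. -/
theorem stmt9 {Ω : Type*} {m0 : MeasurableSpace Ω} (μ : Measure Ω) [IsProbabilityMeasure μ]
    (ℱ : Filtration ℕ m0) (p n : ℕ) (hp : 1 ≤ p) (hn : 1 ≤ n)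
    (K : ℝ) (hK : 0 ≤ K)
    (G : ℕ → Ω → Fin p → ℝ) (u : ℕ → Ω → ℝ)
    (hGmeas : ∀ t ∈ Finset.Icc 1 n, ∀ i, StronglyMeasurable[ℱ (t - 1)] fun ω => G t ω i)
    (humeas : ∀ t ∈ Finset.Icc 1 n, StronglyMeasurable[ℱ t] (u t))
    (huL2 : ∀ t ∈ Finset.Icc 1 n, Integrable (fun ω => (u t ω) ^ 2) μ)
    (hmd : ∀ t ∈ Finset.Icc 1 n, μ[u t|ℱ (t - 1)] =ᵐ[μ] 0)
    (hGuL2 : ∀ t ∈ Finset.Icc 1 n, ∀ i, Integrable (fun ω => (G t ω i * u t ω) ^ 2) μ)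
    (hmom : ∀ t ∈ Finset.Icc 1 n,
      ∫ ω, (⨆ i, |G t ω i|) ^ 2 * (μ[(fun ω' => (u t ω') ^ 2)|ℱ (t - 1)]) ω ∂μ ≤ K) :
    ∫ ω, (⨆ i, |(1 / n : ℝ) * ∑ t ∈ Finset.Icc 1 n, G t ω i * u t ω|) ∂μ
      ≤ 2 * Real.sqrt 2 * Real.sqrt (K * Real.log (1 + p) / n) :=
  stmt9_general μ ℱ p n hp K G u hGmeas humeas huL2 hmd hGuL2 hmom
end

section
/- (Lemma 2.7, Cramér–Wold reduction.) Let (Ω, 𝒜, P) be a probability space, s ∈ ℕ, and T₀ ⊆ ℕ a finite set of cardinality s. Let θ₀ : ℕ → ℝ satisfy θ₀_j ≠ 0 exactly for j ∈ T₀. For each n ∈ ℕ let T̂_n : Ω → 𝒫(ℕ) be a random finite index set and θ̃_n : Ω → (ℕ → ℝ) be measurable with (θ̃_n(ω))_j = 0 for all j ∉ T̂_n(ω). Let Σ ∈ ℝ^{s×s} be positive semidefinite. Assume: (a) P(T̂_n = T₀) → 1 as n → ∞; and (b) the ℝ^s-valued random vectors W_n := ( √n·(θ̃_n − θ₀)_j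 )_{j ∈ T₀} · 1_{{T̂_n = T₀}} converge in distribution to the centered Gaussian distribution on ℝ^s with covariance matrix Σ. Then for every u ∈ ℓ²(ℕ), the real random variables ⟨u, R_n⟩ := Σ_{j ∈ ℕ} u_j·√n·((θ̃_n)_j − θ₀_j) converge in distribution, as n → ∞, to the Gaussian distribution N(0, u_{T₀}ᵀ Σ u_{T₀}), where u_{T₀} ∈ ℝ^s is the restriction of u to the coordinates in T₀ (all sums are finite sums since θ̃_n and θ₀ have finite support). -/
/-!
On the event `{T̂_n = T₀}` both `θ̃_n` and `θ₀` vanish off `T₀`, so `⟨u, R_n⟩` equals the linear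
functional `x ↦ ∑_{j ∈ T₀} u_j x_j` applied to `W_n`. Testing the convergence in distribution of
`W_n` against `f` composed with this functional gives the Gaussian limit (the hypothesis on `ν` is
the Cramér–Wold description of the limit law), and off the event the two integrands differ by at
most `2‖f‖`, which costs `2‖f‖ · P(T̂_n ≠ T₀) → 0`.
-/

open MeasureTheory ProbabilityTheory Filter Finset BoundedContinuousFunction

open scoped Topology

theorem Measurable.tsum_of_summable {α E : Type*} [MeasurableSpace α] [TopologicalSpace E]
    [AddCommMonoid E] [MeasurableSpace E] [MeasurableAdd₂ E]
    [TopologicalSpace.PseudoMetrizableSpace E] [BorelSpace E] {f : ℕ → α → E}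
    (hf : ∀ j, Measurable (f j)) (hsum : ∀ x, Summable fun j => f j x) : Measurable fun x => ∑' j, f j x :=
  measurable_of_tendsto_metrizable (fun N => Finset.measurable_sum (range N) fun j _ => hf j)
    (tendsto_pi_nhds.2 fun x => (hsum x).hasSum.tendsto_sum_nat)

section EqOnLargeEvent

variable {Ω E : Type*} [MeasurableSpace Ω] {μ : Measure Ω}
  [TopologicalSpace E] [MeasurableSpace E] [OpensMeasurableSpace E]

theorem BoundedContinuousFunction.integrable_comp [IsFiniteMeasure μ] (f : E →ᵇ ℝ) {X : Ω → E}
    (hX : AEMeasurable X μ) : Integrable (fun ω => f (X ω)) μ :=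
  .of_bound (f.continuous.measurable.comp_aemeasurable hX).aestronglyMeasurable ‖f‖
    (ae_of_all _ fun _ => f.norm_coe_le_norm _)

theorem BoundedContinuousFunction.dist_integral_comp_le_of_eqOn [IsFiniteMeasure μ] (f : E →ᵇ ℝ)
    {X Y : Ω → E} (hX : AEMeasurable X μ) (hY : AEMeasurable Y μ) {A : Set Ω}
    (hA : MeasurableSet A) (hXY : Set.EqOn X Y A) :
    dist (∫ ω, f (X ω) ∂μ) (∫ ω, f (Y ω) ∂μ) ≤ 2 * ‖f‖ * μ.real Aᶜ := by
  rw [dist_eq_norm, ← integral_sub (f.integrable_comp hX) (f.integrable_comp hY),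
    mul_comm, ← smul_eq_mul, ← integral_indicator_const _ hA.compl]
  refine norm_integral_le_of_norm_le ((integrable_const _).indicator hA.compl)
    (ae_of_all _ fun ω => ?_)
  by_cases hω : ω ∈ A
  · simp [hω, hXY hω]
  · simpa [hω, ← dist_eq_norm] using f.dist_le_two_norm (X ω) (Y ω)

theorem BoundedContinuousFunction.tendsto_integral_comp_of_eqOn [IsProbabilityMeasure μ]
    {ι : Type*} {l : Filter ι} (f : E →ᵇ ℝ) {X Y : ι → Ω → E}
    (hX : ∀ i, AEMeasurable (X i) μ) (hY : ∀ i, AEMeasurable (Y i) μ) {A : ι → Set Ω}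
    (hA : ∀ i, MeasurableSet (A i)) (hXY : ∀ i, Set.EqOn (X i) (Y i) (A i))
    (hA_one : Tendsto (fun i => μ (A i)) l (𝓝 1)) {c : ℝ}
    (hYc : Tendsto (fun i => ∫ ω, f (Y i ω) ∂μ) l (𝓝 c)) :
    Tendsto (fun i => ∫ ω, f (X i ω) ∂μ) l (𝓝 c) := by
  have hA_compl : Tendsto (fun i => μ.real (A i)ᶜ) l (𝓝 0) := by
    have hA_real : Tendsto (fun i => μ.real (A i)) l (𝓝 1) := by
      simpa [Function.comp_def, Measure.real] using
        (ENNReal.tendsto_toReal ENNReal.one_ne_top).comp hA_one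
    simpa [probReal_compl_eq_one_sub (hA _)] using hA_real.const_sub 1
  refine hYc.congr_dist (squeeze_zero (fun _ => dist_nonneg) (fun i => ?_)
    (by simpa using hA_compl.const_mul (2 * ‖f‖)))
  rw [dist_comm]
  exact f.dist_integral_comp_le_of_eqOn (hX i) (hY i) (hA i) (hXY i)

end EqOnLargeEvent

theorem stmt18_general {Ω : Type*} [MeasureSpace Ω] [IsProbabilityMeasure (ℙ : Measure Ω)]
    (T₀ : Finset ℕ)
    (θ₀ : ℕ → ℝ) (hsupp : ∀ j, θ₀ j ≠ 0 ↔ j ∈ T₀)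
    (That : ℕ → Ω → Finset ℕ)
    (θtil : ℕ → Ω → ℕ → ℝ)
    (hmeas : ∀ n j, Measurable fun ω => θtil n ω j)
    (hThatmeas : ∀ n, MeasurableSet {ω | That n ω = T₀})
    (hzero : ∀ n ω j, j ∉ That n ω → θtil n ω j = 0)
    (Sig : Matrix ↥T₀ ↥T₀ ℝ)
    (ν : Measure (↥T₀ → ℝ))
    (hGauss : ∀ a : ↥T₀ → ℝ, ν.map (fun x => ∑ j, a j * x j)
      = gaussianReal 0 (Real.toNNReal (∑ i, ∑ j, a i * Sig i j * a j)))
    (hsel : Tendsto (fun n => ℙ {ω | That n ω = T₀}) atTop (nhds 1))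
    (hW : ∀ f : (↥T₀ → ℝ) →ᵇ ℝ,
      Tendsto (fun n : ℕ => ∫ ω, f (fun j : ↥T₀ =>
          if That n ω = T₀ then Real.sqrt n * (θtil n ω j - θ₀ j) else 0))
        atTop (nhds (∫ x, f x ∂ν))) :
    ∀ u : ℕ → ℝ, Summable (fun j => (u j) ^ 2) →
      ∀ f : ℝ →ᵇ ℝ,
        Tendsto (fun n : ℕ => ∫ ω, f (∑' j : ℕ, u j * (Real.sqrt n * (θtil n ω j - θ₀ j))))
          atTop (nhds (∫ x, f x ∂(gaussianReal 0
            (Real.toNNReal (∑ i : ↥T₀, ∑ j : ↥T₀, u i * Sig i j * u j))))) := by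
  intro u _ f
  let W n ω (j : ↥T₀) : ℝ := if That n ω = T₀ then Real.sqrt n * (θtil n ω j - θ₀ j) else 0
  let L (x : ↥T₀ → ℝ) : ℝ := ∑ j : ↥T₀, u j * x j
  have hL : Continuous L := by fun_prop
  have hterm_eq_zero n ω j (hj : j ∉ That n ω ∪ T₀) :
      u j * (Real.sqrt n * (θtil n ω j - θ₀ j)) = 0 := by
    rw [Finset.mem_union, not_or] at hj
    rw [hzero n ω j hj.1, not_not.mp (mt (hsupp j).mp hj.2), sub_zero, mul_zero, mul_zero]
  have hlimit : ∫ x, f (L x) ∂ν = ∫ x, f x ∂(gaussianReal 0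
      (Real.toNNReal (∑ i : ↥T₀, ∑ j : ↥T₀, u i * Sig i j * u j))) := by
    rw [← hGauss]
    exact (integral_map hL.aemeasurable f.continuous.aestronglyMeasurable).symm
  refine f.tendsto_integral_comp_of_eqOn (Y := fun n ω => L (W n ω)) (fun n => ?_)
    (fun n => ?_) hThatmeas (fun n ω hω => ?_) hsel (hlimit ▸ hW (f.compContinuous ⟨L, hL⟩))
  · refine (Measurable.tsum_of_summable (fun j => by fun_prop) fun ω => ?_).aemeasurable
    exact summable_of_ne_finset_zero (hterm_eq_zero n ω)
  · have hWn : Measurable (W n) := measurable_pi_lambda _ fun j =>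
      (measurable_const.mul ((hmeas n j).sub measurable_const)).ite (hThatmeas n) measurable_const
    exact (hL.measurable.comp hWn).aemeasurable
  · replace hω : That n ω = T₀ := hω
    rw [tsum_eq_sum fun j hj => hterm_eq_zero n ω j (by simpa [hω] using hj)]
    simp only [W, L, hω, if_true]
    exact (Finset.sum_coe_sort T₀ _).symm

/-- Lemma 2.7 (Cramér–Wold reduction): if the selected set equals the true support with
probability tending to one and the restricted rescaled estimator converges in distribution
to a centered Gaussian with covariance `Σ`, then every ℓ² linear functional of the rescaled
error converges in distribution to `N(0, u_{T₀}ᵀ Σ u_{T₀})`. -/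
theorem stmt18 {Ω : Type*} [MeasureSpace Ω] [IsProbabilityMeasure (ℙ : Measure Ω)]
    (s : ℕ) (T₀ : Finset ℕ) (hcard : T₀.card = s)
    (θ₀ : ℕ → ℝ) (hsupp : ∀ j, θ₀ j ≠ 0 ↔ j ∈ T₀)
    (That : ℕ → Ω → Finset ℕ)
    (θtil : ℕ → Ω → ℕ → ℝ)
    (hmeas : ∀ n j, Measurable fun ω => θtil n ω j)
    (hThatmeas : ∀ n, MeasurableSet {ω | That n ω = T₀})
    (hzero : ∀ n ω j, j ∉ That n ω → θtil n ω j = 0)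
    (Sig : Matrix ↥T₀ ↥T₀ ℝ) (hSig : Sig.PosSemidef)
    (ν : Measure (↥T₀ → ℝ)) (hν : IsProbabilityMeasure ν)
    (hGauss : ∀ a : ↥T₀ → ℝ, ν.map (fun x => ∑ j, a j * x j)
      = gaussianReal 0 (Real.toNNReal (∑ i, ∑ j, a i * Sig i j * a j)))
    (hsel : Tendsto (fun n => ℙ {ω | That n ω = T₀}) atTop (nhds 1))
    (hW : ∀ f : (↥T₀ → ℝ) →ᵇ ℝ,
      Tendsto (fun n : ℕ => ∫ ω, f (fun j : ↥T₀ =>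
          if That n ω = T₀ then Real.sqrt n * (θtil n ω j - θ₀ j) else 0))
        atTop (nhds (∫ x, f x ∂ν))) :
    ∀ u : ℕ → ℝ, Summable (fun j => (u j) ^ 2) →
      ∀ f : ℝ →ᵇ ℝ,
        Tendsto (fun n : ℕ => ∫ ω, f (∑' j : ℕ, u j * (Real.sqrt n * (θtil n ω j - θ₀ j))))
          atTop (nhds (∫ x, f x ∂(gaussianReal 0
            (Real.toNNReal (∑ i : ↥T₀, ∑ j : ↥T₀, u i * Sig i j * u j))))) :=
  stmt18_general T₀ θ₀ hsupp That θtil hmeas hThatmeas hzero Sig ν hGauss hsel hW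
end

section
/- (Lemma 2.5(ii), expansion of the compensator.) Let (Ω, 𝒜, P) be a probability space, s ∈ ℕ with s ≥ 1, and let (Z_t)_{t≥1} be i.i.d. ℝ^s-valued random vectors with E[‖Z₁‖₂⁴] < ∞. Let (H, d_H) be a metric space, h₀ ∈ H, and let σ² : ℝ^s × H → ℝ be such that z ↦ σ²(z, h) is measurable for each h, there is c > 0 with σ²(z, h) ≥ c for all z, h, and there is a measurable Λ : ℝ^s → [0, ∞) with |σ²(z, h₁) − σ²(z, h₂)| ≤ Λ(z)·d_H(h₁, h₂) for all z, h₁, h₂ and E[‖Z₁‖₂²·Λ(Z₁)] < ∞. Let θ₀ ∈ ℝ^s and set I := E[ Z₁Z₁ᵀ / σ²(Z₁, h₀) ] (an s×s matrix with finite entries). Let θ_n : Ω → ℝ^s and h_n : Ω → H be measurable sequences with ‖θ_n − θ₀‖₂ → 0 in probability and d_H(h_n, h₀) → 0 in probability. Then for every ε > 0, P( ‖ (1/n) Σ_{t=1}^n Z_t Z_tᵀ (θ₀ − θ_n) / σ²(Z_t, h_n) + I·(θ_n − θ₀) ‖₂ > ε·‖θ_n − θ₀‖₂ ) → 0 as n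 → ∞. -/
/-! The compensator equals `(I - Aₙ(hₙ)) (θₙ - θ₀)`, where `Aₙ(h) = (1/n) Σₜ Zₜ Zₜᵀ / σ²(Zₜ, h)`,
so by Cauchy–Schwarz the bad event forces some entry of `Aₙ(hₙ) - I` to exceed `ε / s`. Each entry
tends to `0` in probability: `Aₙ(h₀) → I` by the strong law of large numbers, and the Lipschitz
bound on `σ²` gives `|Aₙ(hₙ) - Aₙ(h₀)| ≤ Gₙ · d(hₙ, h₀)` with `Gₙ = (1/n) Σₜ ‖Zₜ‖² Λ(Zₜ) / c²`,
which converges by the strong law as well. -/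

open MeasureTheory ProbabilityTheory Filter Finset Topology
open scoped Matrix

lemma abs_mul_le_sum_sq {n : Type*} [Fintype n] (z : n → ℝ) (i j : n) :
    |z i * z j| ≤ ∑ k, z k ^ 2 := by
  have hi : z i ^ 2 ≤ ∑ k, z k ^ 2 :=
    single_le_sum (f := fun k => z k ^ 2) (fun k _ => sq_nonneg _) (mem_univ i)
  have hj : z j ^ 2 ≤ ∑ k, z k ^ 2 :=
    single_le_sum (f := fun k => z k ^ 2) (fun k _ => sq_nonneg _) (mem_univ j)
  rw [abs_mul, ← sq_abs (z i), ← sq_abs (z j)] at *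
  linarith [two_mul_le_add_sq |z i| |z j|]

lemma abs_div_sub_div_le {a x y c : ℝ} (hc : 0 < c) (hx : c ≤ x) (hy : c ≤ y) :
    |a / x - a / y| ≤ |a| * |x - y| / c ^ 2 := by
  have hx₀ : 0 < x := hc.trans_le hx
  have hy₀ : 0 < y := hc.trans_le hy
  have hxy : a / x - a / y = a * (y - x) / (x * y) := by field_simp
  rw [hxy, abs_div, abs_mul, abs_sub_comm, abs_of_pos (mul_pos hx₀ hy₀)]
  exact div_le_div_of_nonneg_left (by positivity) (by positivity)
    (pow_two c ▸ mul_le_mul hx hy hc.le hx₀.le)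

lemma exists_lt_abs_of_mul_sqrt_lt {n : Type*} [Fintype n] {M : Matrix n n ℝ} {p : n → ℝ}
    {ε : ℝ} (hε : 0 ≤ ε) (h : ε * √(∑ j, p j ^ 2) < √(∑ i, (M *ᵥ p) i ^ 2)) :
    ∃ i j, ε / (Fintype.card n : ℝ) < |M i j| := by
  simp only [Matrix.mulVec, dotProduct] at h
  by_contra! hM
  set k : ℝ := (Fintype.card n : ℝ)
  set P : ℝ := ∑ j, p j ^ 2
  have hrow : ∀ i, (∑ j, M i j * p j) ^ 2 ≤ k * (ε / k) ^ 2 * P := fun i =>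
    calc (∑ j, M i j * p j) ^ 2 ≤ (∑ j, M i j ^ 2) * P := sum_mul_sq_le_sq_mul_sq _ _ _
      _ ≤ (∑ _j : n, (ε / k) ^ 2) * P := by
          refine mul_le_mul_of_nonneg_right (sum_le_sum fun j _ => ?_) (by positivity)
          exact sq_le_sq' (abs_le.1 (hM i j)).1 (abs_le.1 (hM i j)).2
      _ = k * (ε / k) ^ 2 * P := by simp [k]
  have hkε : (k * (ε / k)) ^ 2 ≤ ε ^ 2 := by
    rcases eq_or_ne k 0 with hk | hk
    · simpa [hk] using sq_nonneg ε
    · rw [mul_div_cancel₀ _ hk]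
  have hsum : ∑ i, (∑ j, M i j * p j) ^ 2 ≤ (ε * √P) ^ 2 :=
    calc ∑ i, (∑ j, M i j * p j) ^ 2 ≤ ∑ _i : n, k * (ε / k) ^ 2 * P :=
          sum_le_sum fun i _ => hrow i
      _ = (k * (ε / k)) ^ 2 * P := by rw [sum_const, card_univ, nsmul_eq_mul]; ring
      _ ≤ ε ^ 2 * P := by gcongr
      _ = (ε * √P) ^ 2 := by rw [mul_pow, Real.sq_sqrt (by positivity)]
  exact h.not_ge ((Real.sqrt_le_sqrt hsum).trans_eq (Real.sqrt_sq (by positivity)))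

noncomputable def sampleMean (N : ℕ) (x : ℕ → ℝ) : ℝ := (1 / N : ℝ) * ∑ t ∈ Icc 1 N, x t

lemma sampleMean_mul_sum_div {n : Type*} [Fintype n] (N : ℕ) (z : ℕ → n → ℝ) (w : ℕ → ℝ)
    (q : n → ℝ) (i : n) :
    sampleMean N (fun t => (z t i * ∑ j, z t j * q j) / w t) =
      ∑ j, sampleMean N (fun t => z t i * z t j / w t) * q j := by
  simp only [sampleMean, mul_sum, sum_div, sum_mul]
  rw [sum_comm]
  exact sum_congr rfl fun j _ => sum_congr rfl fun t _ => by ring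

lemma abs_sampleMean_sub_le {N : ℕ} {a b C : ℕ → ℝ} {d : ℝ} (h : ∀ t, |a t - b t| ≤ C t * d) :
    |sampleMean N a - sampleMean N b| ≤ sampleMean N C * d := by
  simp only [sampleMean]
  rw [← mul_sub, ← sum_sub_distrib, abs_mul, abs_of_nonneg (by positivity), mul_assoc, sum_mul]
  gcongr
  exact (abs_sum_le_sum_abs _ _).trans (sum_le_sum fun t _ => h t)

section Probability

variable {α ι κ : Type*} {m : MeasurableSpace α} {μ : Measure α} {l : Filter ι}

lemma tendsto_measure_of_subset_union {S E F : ι → Set α} (hS : ∀ i, S i ⊆ E i ∪ F i)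
    (hE : Tendsto (fun i => μ (E i)) l (𝓝 0)) (hF : Tendsto (fun i => μ (F i)) l (𝓝 0)) :
    Tendsto (fun i => μ (S i)) l (𝓝 0) :=
  tendsto_of_tendsto_of_tendsto_of_le_of_le tendsto_const_nhds (by simpa using hE.add hF)
    (fun _ => zero_le) fun i => (measure_mono (hS i)).trans (measure_union_le _ _)

lemma tendsto_measure_of_subset_iUnion [Fintype κ] {S : ι → Set α} {E : κ → ι → Set α}
    (hS : ∀ i, S i ⊆ ⋃ k, E k i) (hE : ∀ k, Tendsto (fun i => μ (E k i)) l (𝓝 0)) :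
    Tendsto (fun i => μ (S i)) l (𝓝 0) :=
  tendsto_of_tendsto_of_tendsto_of_le_of_le tendsto_const_nhds
    (by simpa using tendsto_finsetSum univ fun k _ => hE k)
    (fun _ => zero_le) fun i => (measure_mono (hS i)).trans (measure_iUnion_fintype_le _ _)

namespace MeasureTheory.TendstoInMeasure

lemma of_norm_sub_le_add {E F G : Type*} [SeminormedAddCommGroup E] [SeminormedAddCommGroup F]
    [SeminormedAddCommGroup G] {f : ι → α → E} {f' : α → E} {g : ι → α → F} {g' : α → F}
    {h : ι → α → G} {h' : α → G} (hg : TendstoInMeasure μ g l g') (hh : TendstoInMeasure μ h l h')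
    (hf : ∀ i x, ‖f i x - f' x‖ ≤ ‖g i x - g' x‖ + ‖h i x - h' x‖) :
    TendstoInMeasure μ f l f' := by
  rw [tendstoInMeasure_iff_norm] at *
  intro ε hε
  refine tendsto_measure_of_subset_union (fun i x hx => ?_) (hg (ε / 2) (by positivity))
    (hh (ε / 2) (by positivity))
  by_contra hx'
  simp only [Set.mem_union, Set.mem_ofPred_eq, not_or, not_le] at hx hx'
  linarith [hf i x]

lemma mul_zero {R : Type*} [SeminormedRing R] {f g : ι → α → R} {a : R}
    (hf : TendstoInMeasure μ f l fun _ => a) (hg : TendstoInMeasure μ g l 0) :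
    TendstoInMeasure μ (fun i x => f i x * g i x) l 0 := by
  rw [tendstoInMeasure_iff_norm] at *
  intro ε hε
  refine tendsto_measure_of_subset_union (fun i x hx => ?_) (hf 1 one_pos)
    (hg (ε / (‖a‖ + 1)) (by positivity))
  by_contra hx'
  simp only [Set.mem_union, Set.mem_ofPred_eq, not_or, not_le, Pi.zero_apply, sub_zero] at hx hx'
  have hfa : ‖f i x‖ ≤ ‖a‖ + 1 := by
    linarith [norm_le_norm_add_norm_sub' (f i x) a]
  have hlt : ‖f i x * g i x‖ < ε :=
    calc ‖f i x * g i x‖ ≤ (‖a‖ + 1) * ‖g i x‖ :=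
          (norm_mul_le _ _).trans (mul_le_mul_of_nonneg_right hfa (norm_nonneg _))
      _ < ε := by rw [lt_div_iff₀' (by positivity)] at hx'; exact hx'.2
  exact hlt.not_ge hx

end MeasureTheory.TendstoInMeasure

lemma tendstoInMeasure_sampleMean [IsFiniteMeasure μ] {β : Type*} [MeasurableSpace β]
    {Z : ℕ → α → β} (hindep : Pairwise fun i j => IndepFun (Z i) (Z j) μ)
    (hident : ∀ t, IdentDistrib (Z t) (Z 0) μ μ) {φ : β → ℝ} (hφ : Measurable φ)
    (hint : Integrable (fun x => φ (Z 0 x)) μ) :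
    TendstoInMeasure μ (fun N x => sampleMean N fun t => φ (Z t x)) atTop
      fun _ => ∫ x, φ (Z 0 x) ∂μ := by
  have hφZ : ∀ t, IdentDistrib (fun x => φ (Z t x)) (fun x => φ (Z 0 x)) μ μ :=
    fun t => (hident t).comp hφ
  have hslln := strong_law_ae_real (fun i x => φ (Z (i + 1) x)) ((hφZ 1).integrable_iff.2 hint)
    (fun i j hij => (hindep (show i + 1 ≠ j + 1 by omega)).comp hφ hφ)
    (fun i => (hφZ (i + 1)).trans (hφZ 1).symm)
  refine tendstoInMeasure_of_tendsto_ae (fun N => ?_) ?_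
  · exact ((Finset.aemeasurable_fun_sum _ fun t _ =>
      hφ.comp_aemeasurable (hident t).aemeasurable_fst).const_mul _).aestronglyMeasurable
  · filter_upwards [hslln] with x hx
    rw [(hφZ 1).integral_eq] at hx
    convert hx using 2 with N
    rw [sampleMean, ← Ico_add_one_right_eq_Icc, sum_Ico_eq_sum_range]
    simp [add_comm, div_eq_inv_mul]

end Probability

section Regression

variable {n H : Type*}

noncomputable def weightedGram (σ2 : (n → ℝ) → H → ℝ) (z : ℕ → n → ℝ) (h : H) (N : ℕ) :
    Matrix n n ℝ :=
  Matrix.of fun i j => sampleMean N fun t => z t i * z t j / σ2 (z t) h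

lemma compensator_eq_mulVec [Fintype n] (σ2 : (n → ℝ) → H → ℝ) (z : ℕ → n → ℝ) (h : H) (N : ℕ)
    (I : Matrix n n ℝ) (θ θ₀ : n → ℝ) (i : n) :
    (1 / N : ℝ) * (∑ t ∈ Icc 1 N, (z t i * ∑ j, z t j * (θ₀ j - θ j)) / σ2 (z t) h)
        + ∑ j, I i j * (θ j - θ₀ j) =
      ((I - weightedGram σ2 z h N) *ᵥ (θ - θ₀)) i := by
  rw [← sampleMean, sampleMean_mul_sum_div, ← sum_add_distrib]
  simp only [Matrix.mulVec, dotProduct, Matrix.sub_apply, Pi.sub_apply, weightedGram,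
    Matrix.of_apply]
  exact sum_congr rfl fun j _ => by ring

lemma abs_mul_div_sub_mul_div_le [Fintype n] [PseudoMetricSpace H] {σ2 : (n → ℝ) → H → ℝ}
    {Λ : (n → ℝ) → ℝ} {c : ℝ} (hc : 0 < c) (hlb : ∀ z h, c ≤ σ2 z h)
    (hLip : ∀ z h₁ h₂, |σ2 z h₁ - σ2 z h₂| ≤ Λ z * dist h₁ h₂) (z : n → ℝ) (i j : n)
    (h₁ h₂ : H) :
    |z i * z j / σ2 z h₁ - z i * z j / σ2 z h₂| ≤
      (∑ k, z k ^ 2) * Λ z / c ^ 2 * dist h₁ h₂ :=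
  calc |z i * z j / σ2 z h₁ - z i * z j / σ2 z h₂|
      ≤ |z i * z j| * |σ2 z h₁ - σ2 z h₂| / c ^ 2 := abs_div_sub_div_le hc (hlb _ _) (hlb _ _)
    _ ≤ (∑ k, z k ^ 2) * (Λ z * dist h₁ h₂) / c ^ 2 := by
        gcongr
        exacts [abs_mul_le_sum_sq z i j, hLip z h₁ h₂]
    _ = (∑ k, z k ^ 2) * Λ z / c ^ 2 * dist h₁ h₂ := by ring

lemma abs_weightedGram_sub_le [Fintype n] [PseudoMetricSpace H] {σ2 : (n → ℝ) → H → ℝ}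
    {Λ : (n → ℝ) → ℝ} {c : ℝ} (hc : 0 < c) (hlb : ∀ z h, c ≤ σ2 z h)
    (hLip : ∀ z h₁ h₂, |σ2 z h₁ - σ2 z h₂| ≤ Λ z * dist h₁ h₂) (z : ℕ → n → ℝ) (h₁ h₂ : H)
    (N : ℕ) (i j : n) :
    |weightedGram σ2 z h₁ N i j - weightedGram σ2 z h₂ N i j| ≤
      (sampleMean N fun t => (∑ k, z t k ^ 2) * Λ (z t) / c ^ 2) * dist h₁ h₂ :=
  abs_sampleMean_sub_le fun t => abs_mul_div_sub_mul_div_le hc hlb hLip (z t) i j h₁ h₂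

lemma integrable_mul_div_of_integrable_sum_sq [Fintype n] {α : Type*} {m : MeasurableSpace α}
    {μ : Measure α} {X : α → n → ℝ} {w : α → ℝ} {c : ℝ}
    (hX : Integrable (fun x => ∑ k, X x k ^ 2) μ) (hc : 0 < c) (hw : ∀ x, c ≤ w x) {i j : n}
    (hm : AEStronglyMeasurable (fun x => X x i * X x j / w x) μ) :
    Integrable (fun x => X x i * X x j / w x) μ :=
  (hX.div_const c).mono' hm <| ae_of_all _ fun x => by
    rw [Real.norm_eq_abs, abs_div, abs_of_pos (hc.trans_le (hw x))]
    exact div_le_div₀ (by positivity) (abs_mul_le_sum_sq _ i j) hc (hw x)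

variable {α : Type*} {m : MeasurableSpace α} {μ : Measure α}

lemma tendstoInMeasure_weightedGram [Fintype n] [IsFiniteMeasure μ] {σ2 : (n → ℝ) → H → ℝ}
    {c : ℝ} {Z : ℕ → α → n → ℝ} (hindep : Pairwise fun i j => IndepFun (Z i) (Z j) μ)
    (hident : ∀ t, IdentDistrib (Z t) (Z 0) μ μ) (hZ : Integrable (fun x => ∑ k, Z 0 x k ^ 2) μ)
    {h : H} (hσ : Measurable fun z => σ2 z h) (hc : 0 < c) (hlb : ∀ z, c ≤ σ2 z h) (i j : n) :
    TendstoInMeasure μ (fun N x => weightedGram σ2 (fun t => Z t x) h N i j) atTop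
      fun _ => ∫ x, Z 0 x i * Z 0 x j / σ2 (Z 0 x) h ∂μ := by
  have hφ : Measurable fun z : n → ℝ => z i * z j / σ2 z h := by fun_prop
  exact tendstoInMeasure_sampleMean (φ := fun z => z i * z j / σ2 z h) hindep hident hφ
    (integrable_mul_div_of_integrable_sum_sq hZ hc (fun _ => hlb _)
      (hφ.comp_aemeasurable (hident 0).aemeasurable_fst).aestronglyMeasurable)

lemma tendstoInMeasure_weightedGram_of_lipschitz [Fintype n] [PseudoMetricSpace H]
    {σ2 : (n → ℝ) → H → ℝ} {Λ : (n → ℝ) → ℝ} {c : ℝ} (hc : 0 < c) (hlb : ∀ z h, c ≤ σ2 z h)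
    (hLip : ∀ z h₁ h₂, |σ2 z h₁ - σ2 z h₂| ≤ Λ z * dist h₁ h₂) {Z : ℕ → α → n → ℝ} {h₀ : H}
    {hn : ℕ → α → H} {l : Filter ℕ} {i j : n} {a γ : ℝ}
    (hgram : TendstoInMeasure μ (fun N x => weightedGram σ2 (fun t => Z t x) h₀ N i j) l
      fun _ => a)
    (hG : TendstoInMeasure μ
      (fun N x => sampleMean N fun t => (∑ k, Z t x k ^ 2) * Λ (Z t x) / c ^ 2) l fun _ => γ)
    (hd : TendstoInMeasure μ hn l fun _ => h₀) :
    TendstoInMeasure μ (fun N x => weightedGram σ2 (fun t => Z t x) (hn N x) N i j) l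
      fun _ => a := by
  have hdist : TendstoInMeasure μ (fun N x => dist (hn N x) h₀) l 0 :=
    tendstoInMeasure_iff_norm.2 fun δ hδ => by simpa using tendstoInMeasure_iff_dist.1 hd δ hδ
  refine hgram.of_norm_sub_le_add (hG.mul_zero hdist) fun N x => ?_
  simp only [Real.norm_eq_abs, Pi.zero_apply, sub_zero]
  linarith [abs_weightedGram_sub_le hc hlb hLip (fun t => Z t x) (hn N x) h₀ N i j,
    abs_sub_le (weightedGram σ2 (fun t => Z t x) (hn N x) N i j)
      (weightedGram σ2 (fun t => Z t x) h₀ N i j) a,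
    le_abs_self ((sampleMean N fun t => (∑ k, Z t x k ^ 2) * Λ (Z t x) / c ^ 2) * dist (hn N x) h₀)]

end Regression

theorem stmt19_general {Ω : Type*} [MeasureSpace Ω] [IsProbabilityMeasure (ℙ : Measure Ω)]
    (s : ℕ)
    (Z : ℕ → Ω → Fin s → ℝ) (hZmeas : ∀ t, Measurable (Z t))
    (hindep : iIndepFun Z ℙ)
    (hident : ∀ t, (ℙ : Measure Ω).map (Z t) = (ℙ : Measure Ω).map (Z 0))
    (hmom4 : Integrable (fun ω => (∑ i, (Z 0 ω i) ^ 2) ^ 2) ℙ)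
    (H : Type*) [MetricSpace H]
    (h₀ : H) (σ2 : (Fin s → ℝ) → H → ℝ)
    (hσmeas : ∀ h, Measurable fun z => σ2 z h)
    (c : ℝ) (hc : 0 < c) (hlb : ∀ z h, c ≤ σ2 z h)
    (Λ : (Fin s → ℝ) → ℝ) (hΛmeas : Measurable Λ)
    (hLip : ∀ z h₁ h₂, |σ2 z h₁ - σ2 z h₂| ≤ Λ z * dist h₁ h₂)
    (hmomΛ : Integrable (fun ω => (∑ i, (Z 0 ω i) ^ 2) * Λ (Z 0 ω)) ℙ)
    (θ₀ : Fin s → ℝ)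
    (I : Matrix (Fin s) (Fin s) ℝ)
    (hI : ∀ i j, I i j = ∫ ω, (Z 0 ω i * Z 0 ω j) / σ2 (Z 0 ω) h₀)
    (θn : ℕ → Ω → Fin s → ℝ)
    (hn : ℕ → Ω → H)
    (hhconv : ∀ ε : ℝ, 0 < ε →
      Tendsto (fun n => ℙ {ω | ε ≤ dist (hn n ω) h₀}) atTop (nhds 0)) :
    ∀ ε : ℝ, 0 < ε →
      Tendsto (fun n : ℕ => ℙ {ω |
          ε * Real.sqrt (∑ i, (θn n ω i - θ₀ i) ^ 2) <
            Real.sqrt (∑ i,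
              ((1 / n : ℝ) * (∑ t ∈ Finset.Icc 1 n,
                  (Z t ω i * ∑ j, Z t ω j * (θ₀ j - θn n ω j)) / σ2 (Z t ω) (hn n ω))
                + ∑ j, I i j * (θn n ω j - θ₀ j)) ^ 2)})
        atTop (nhds 0) := by
  intro ε hε
  have hpair : Pairwise fun t u => IndepFun (Z t) (Z u) ℙ := fun t u htu => hindep.indepFun htu
  have hiid : ∀ t, IdentDistrib (Z t) (Z 0) ℙ ℙ := fun t =>
    ⟨(hZmeas t).aemeasurable, (hZmeas 0).aemeasurable, hident t⟩
  have hZ2 : Integrable (fun ω => ∑ k, Z 0 ω k ^ 2) ℙ :=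
    ((memLp_two_iff_integrable_sq (by fun_prop)).2 hmom4).integrable one_le_two
  have hG := tendstoInMeasure_sampleMean (φ := fun z => (∑ k, z k ^ 2) * Λ z / c ^ 2) hpair hiid
    (by fun_prop) (hmomΛ.div_const _)
  have hgram : ∀ i j, TendstoInMeasure ℙ
      (fun n ω => weightedGram σ2 (fun t => Z t ω) (hn n ω) n i j) atTop fun _ => I i j := by
    intro i j
    simp only [hI]
    exact tendstoInMeasure_weightedGram_of_lipschitz hc hlb hLip
      (tendstoInMeasure_weightedGram hpair hiid hZ2 (hσmeas h₀) hc (hlb · h₀) i j) hG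
      (tendstoInMeasure_iff_dist.2 hhconv)
  refine tendsto_measure_of_subset_iUnion (E := fun (ij : Fin s × Fin s) n =>
    {ω | ε / s ≤ ‖weightedGram σ2 (fun t => Z t ω) (hn n ω) n ij.1 ij.2 - I ij.1 ij.2‖})
    (fun n ω hω => ?_) fun ⟨i, j⟩ =>
      tendstoInMeasure_iff_norm.1 (hgram i j) _ (by have := i.pos; positivity)
  simp only [Set.mem_ofPred_eq, compensator_eq_mulVec] at hω
  obtain ⟨i, j, hij⟩ := exists_lt_abs_of_mul_sqrt_lt (p := θn n ω - θ₀) hε.le hω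
  exact Set.mem_iUnion.2 ⟨(i, j), by simpa [Real.norm_eq_abs, abs_sub_comm] using hij.le⟩

/-- Lemma 2.5(ii) (expansion of the compensator): for i.i.d. covariates and consistent
estimators of the parameter and the nuisance parameter, the compensated weighted
least-squares score admits a first-order expansion with the information matrix,
with remainder `o_p(‖θ_n − θ₀‖₂)`. -/
theorem stmt19 {Ω : Type*} [MeasureSpace Ω] [IsProbabilityMeasure (ℙ : Measure Ω)]
    (s : ℕ) (hs : 1 ≤ s)
    (Z : ℕ → Ω → Fin s → ℝ) (hZmeas : ∀ t, Measurable (Z t))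
    (hindep : iIndepFun Z ℙ)
    (hident : ∀ t, (ℙ : Measure Ω).map (Z t) = (ℙ : Measure Ω).map (Z 0))
    (hmom4 : Integrable (fun ω => (∑ i, (Z 0 ω i) ^ 2) ^ 2) ℙ)
    (H : Type*) [MetricSpace H] [MeasurableSpace H] [BorelSpace H]
    (h₀ : H) (σ2 : (Fin s → ℝ) → H → ℝ)
    (hσmeas : ∀ h, Measurable fun z => σ2 z h)
    (c : ℝ) (hc : 0 < c) (hlb : ∀ z h, c ≤ σ2 z h)
    (Λ : (Fin s → ℝ) → ℝ) (hΛmeas : Measurable Λ) (hΛnonneg : ∀ z, 0 ≤ Λ z)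
    (hLip : ∀ z h₁ h₂, |σ2 z h₁ - σ2 z h₂| ≤ Λ z * dist h₁ h₂)
    (hmomΛ : Integrable (fun ω => (∑ i, (Z 0 ω i) ^ 2) * Λ (Z 0 ω)) ℙ)
    (θ₀ : Fin s → ℝ)
    (I : Matrix (Fin s) (Fin s) ℝ)
    (hI : ∀ i j, I i j = ∫ ω, (Z 0 ω i * Z 0 ω j) / σ2 (Z 0 ω) h₀)
    (θn : ℕ → Ω → Fin s → ℝ) (hθmeas : ∀ n, Measurable (θn n))
    (hn : ℕ → Ω → H) (hhmeas : ∀ n, Measurable (hn n))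
    (hθconv : ∀ ε : ℝ, 0 < ε →
      Tendsto (fun n => ℙ {ω | ε ≤ Real.sqrt (∑ i, (θn n ω i - θ₀ i) ^ 2)}) atTop (nhds 0))
    (hhconv : ∀ ε : ℝ, 0 < ε →
      Tendsto (fun n => ℙ {ω | ε ≤ dist (hn n ω) h₀}) atTop (nhds 0)) :
    ∀ ε : ℝ, 0 < ε →
      Tendsto (fun n : ℕ => ℙ {ω |
          ε * Real.sqrt (∑ i, (θn n ω i - θ₀ i) ^ 2) <
            Real.sqrt (∑ i,
              ((1 / n : ℝ) * (∑ t ∈ Finset.Icc 1 n,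
                  (Z t ω i * ∑ j, Z t ω j * (θ₀ j - θn n ω j)) / σ2 (Z t ω) (hn n ω))
                + ∑ j, I i j * (θn n ω j - θ₀ j)) ^ 2)})
        atTop (nhds 0) :=
  stmt19_general s Z hZmeas hindep hident hmom4 H h₀ σ2 hσmeas c hc hlb Λ hΛmeas hLip hmomΛ θ₀ I hI
    θn hn hhconv
end
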